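/- arXiv:2605.14871 — 4 statements merged into one kernel-verified Lean document; each statement's English description precedes it below -/
import Mathlib

section
/- For all positive integers m and n with 2 ≤ m ≤ n, one has g_n/n = Σ_{k=m}^{n} (g_k − A_k)/(k-1) − (p_n − 2)/n + A_{m-1}. -/
open Finset Real

/-- `p n` is the `n`-th prime number, with `p 1 = 2`, `p 2 = 3`, `p 3 = 5`, ... -/
noncomputable def p (n : ℕ) : ℕ := Nat.nth Nat.Prime (n - 1)

/-- `g n = p (n+1) - p n` is the `n`-th prime gap. -/
noncomputable def g (n : ℕ) : ℕ := p (n + 1) - p n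

/-- `A k = (p (k+1) - 2) / k`, the arithmetic mean of the first `k` prime gaps. -/
noncomputable def A (k : ℕ) : ℝ := ((p (k + 1) : ℝ) - 2) / k

lemma p_mono : Monotone p := by
  intro a b hab
  exact Nat.nth_monotone Nat.infinite_setOf_prime (Nat.sub_le_sub_right hab 1)

lemma g_cast (k : ℕ) : (g k : ℝ) = (p (k + 1) : ℝ) - p k := by
  have := p_mono (Nat.le_succ k)
  rw [g, Nat.cast_sub this]

lemma tel (F : ℕ → ℝ) (m n : ℕ) (h : m ≤ n) :
    ∑ k ∈ Finset.Icc m n, (F k - F (k - 1)) = F n - F (m - 1) := by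
  induction n, h using Nat.le_induction with
  | base => simp
  | succ n hn ih =>
    rw [Finset.sum_Icc_succ_top (hn.trans (Nat.le_succ n)), ih]
    simp only [Nat.add_sub_cancel]
    ring

theorem stmt_1 (m n : ℕ) (hm : 2 ≤ m) (hmn : m ≤ n) :
    (g n : ℝ) / n =
      (∑ k ∈ Finset.Icc m n, ((g k : ℝ) - A k) / ((k : ℝ) - 1)) -
        ((p n : ℝ) - 2) / n + A (m - 1) := by
  have key : ∀ k ∈ Finset.Icc m n,
      ((g k : ℝ) - A k) / ((k : ℝ) - 1) = A k - A (k - 1) := by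
    intro k hk
    have hk2 : 2 ≤ k := hm.trans (Finset.mem_Icc.mp hk).1
    have hk1 : (1 : ℕ) ≤ k := by omega
    have hks : k - 1 + 1 = k := by omega
    have hkc : ((k - 1 : ℕ) : ℝ) = (k : ℝ) - 1 := by
      rw [Nat.cast_sub hk1]; norm_num
    have hk0 : (k : ℝ) ≠ 0 := by positivity
    have hkne : (k : ℝ) - 1 ≠ 0 := by
      have : (2 : ℝ) ≤ (k : ℝ) := by exact_mod_cast hk2
      linarith
    rw [A, A, hks, hkc, g_cast k]
    field_simp
    ring
  rw [Finset.sum_congr rfl key, tel A m n hmn]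
  have hn0 : (n : ℝ) ≠ 0 := by
    have : 2 ≤ n := hm.trans hmn
    positivity
  rw [g_cast n, A]
  ring
end

section
/- For all positive integers n with n ≥ 6, one has p_{n+1} < 2 n log(n − 1). -/
set_option maxRecDepth 100000

open Finset Real

section Aux

/-- Chebyshev-type bound via the central binomial coefficient. -/
lemma aux_cheby (m : ℕ) (hm : 1 ≤ m) :
    4 ^ m ≤ (2 * m) ^ (Nat.count Nat.Prime (2 * m + 1) + 1) := by
  have h1 : 4 ^ m ≤ 2 * m * Nat.centralBinom m :=
    Nat.four_pow_le_two_mul_self_mul_centralBinom m hm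
  have h2 : Nat.centralBinom m ≤ (2 * m) ^ (Nat.count Nat.Prime (2 * m + 1)) := by
    conv_lhs => rw [← Nat.prod_pow_factorization_centralBinom m]
    have heq : ∏ q ∈ (Finset.range (2 * m + 1)).filter Nat.Prime,
            q ^ (Nat.centralBinom m).factorization q
        = ∏ q ∈ Finset.range (2 * m + 1), q ^ (Nat.centralBinom m).factorization q := by
      apply Finset.prod_filter_of_ne
      intro x _ hx
      by_contra hnp
      rw [Nat.factorization_eq_zero_of_not_prime _ hnp] at hx
      simp at hx
    rw [← heq, Nat.count_eq_card_filter_range, ← Finset.prod_const]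
    apply Finset.prod_le_prod
    · intro i _; positivity
    · intro i _
      have := Nat.pow_factorization_choose_le (p := i) (n := 2 * m) (k := m) (by omega)
      simpa [Nat.centralBinom] using this
  calc 4 ^ m ≤ 2 * m * Nat.centralBinom m := h1
    _ ≤ 2 * m * (2 * m) ^ (Nat.count Nat.Prime (2 * m + 1)) := Nat.mul_le_mul_left _ h2
    _ = (2 * m) ^ (Nat.count Nat.Prime (2 * m + 1) + 1) := by ring

lemma aux_log_ge (k : ℕ) (x : ℝ) (hx : 0 < x) :
    (k : ℝ) * 0.6931471803 + 1 - 2 ^ k / x ≤ Real.log x := by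
  have h2k : (0:ℝ) < 2 ^ k := by positivity
  have h1 : Real.log ((2 ^ k) / x) ≤ (2 ^ k) / x - 1 :=
    Real.log_le_sub_one_of_pos (by positivity)
  rw [Real.log_div (ne_of_gt h2k) (ne_of_gt hx)] at h1
  have h2 : Real.log ((2:ℝ) ^ k) = (k : ℝ) * Real.log 2 := by rw [Real.log_pow]
  have l2 : (0.6931471803:ℝ) < Real.log 2 := Real.log_two_gt_d9
  nlinarith [Nat.cast_nonneg (α := ℝ) k]

lemma aux_asymp (n : ℕ) (hn : 1025 ≤ n) :
    (Nat.nth Nat.Prime n : ℝ) < 2 * n * Real.log ((n : ℝ) - 1) := by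
  have hx : (1025:ℝ) ≤ (n:ℝ) := by exact_mod_cast hn
  obtain ⟨L, hLdef⟩ : ∃ L : ℝ, L = Real.log ((n:ℝ) - 1) := ⟨_, rfl⟩
  have hx1 : (1024:ℝ) ≤ (n:ℝ) - 1 := by linarith
  have hx1pos : (0:ℝ) < (n:ℝ) - 1 := by linarith
  have l2lo : (0.6931471803:ℝ) < Real.log 2 := Real.log_two_gt_d9
  have l2hi : Real.log 2 < 0.6931471808 := Real.log_two_lt_d9
  have hL1 : 10 * Real.log 2 ≤ L := by
    have h1024 : Real.log ((2:ℝ) ^ (10:ℕ)) ≤ Real.log ((n:ℝ) - 1) := by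
      apply Real.log_le_log (by positivity)
      norm_num; linarith
    rw [Real.log_pow] at h1024
    rw [hLdef]; push_cast at h1024 ⊢; linarith
  have hLlo : (6.931471803:ℝ) ≤ L := by linarith
  have hLpos : 0 < L := by linarith
  have hxLpos : 0 < (n:ℝ) * L := by positivity
  obtain ⟨m, hmdef⟩ : ∃ m : ℕ, m = ⌊(n:ℝ) * L⌋₊ := ⟨_, rfl⟩
  have hmle : (m:ℝ) ≤ (n:ℝ) * L := hmdef ▸ Nat.floor_le hxLpos.le
  have hmgt : (n:ℝ) * L - 1 < (m:ℝ) := hmdef ▸ Nat.sub_one_lt_floor ((n:ℝ) * L)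
  have hprod : (1025:ℝ) * 6.931471803 ≤ (n:ℝ) * L :=
    mul_le_mul hx hLlo (by norm_num) (by linarith)
  have hm1 : 1 ≤ m := by
    rw [hmdef]; apply Nat.le_floor; push_cast; linarith
  have hm1r : (1:ℝ) ≤ (m:ℝ) := by exact_mod_cast hm1
  have hlogx : Real.log (n:ℝ) ≤ L + 1 / ((n:ℝ) - 1) := by
    have hxpos : (0:ℝ) < (n:ℝ) := by linarith
    have h1 : Real.log ((n:ℝ) / ((n:ℝ) - 1)) ≤ (n:ℝ) / ((n:ℝ) - 1) - 1 :=
      Real.log_le_sub_one_of_pos (by positivity)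
    rw [Real.log_div (ne_of_gt hxpos) (ne_of_gt hx1pos)] at h1
    have h2 : (n:ℝ) / ((n:ℝ) - 1) - 1 = 1 / ((n:ℝ) - 1) := by field_simp; ring
    rw [hLdef]; linarith
  have hlogL : Real.log L ≤ L / 8 + (3 * Real.log 2 - 1) := by
    have h1 : Real.log (L / 8) ≤ L / 8 - 1 := Real.log_le_sub_one_of_pos (by positivity)
    have h2 : Real.log (L / 8) = Real.log L - Real.log 8 :=
      Real.log_div (ne_of_gt hLpos) (by norm_num)
    have h3 : Real.log 8 = 3 * Real.log 2 := by
      rw [show (8:ℝ) = 2 ^ (3:ℕ) by norm_num, Real.log_pow]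
      push_cast; ring
    linarith
  have hcount : n < Nat.count Nat.Prime (2 * m + 1) := by
    by_contra hcon
    push_neg at hcon
    have hcheb := aux_cheby m hm1
    have hr : ((4:ℝ)) ^ m ≤ (2 * (m:ℝ)) ^ (Nat.count Nat.Prime (2 * m + 1) + 1) := by
      have := Nat.cast_le (α := ℝ) |>.mpr hcheb
      push_cast at this
      exact this
    have hlog := Real.log_le_log (by positivity) hr
    rw [Real.log_pow, Real.log_pow] at hlog
    have h4 : Real.log 4 = 2 * Real.log 2 := by
      rw [show (4:ℝ) = 2 ^ (2:ℕ) by norm_num, Real.log_pow]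
      push_cast; ring
    rw [h4] at hlog
    push_cast at hlog
    have hlog2m : Real.log (2 * (m:ℝ)) ≤ Real.log 2 + Real.log (n:ℝ) + Real.log L := by
      have h1 : Real.log (2 * (m:ℝ)) ≤ Real.log (2 * ((n:ℝ) * L)) := by
        apply Real.log_le_log (by positivity)
        linarith
      have h2 : Real.log (2 * ((n:ℝ) * L)) = Real.log 2 + Real.log (n:ℝ) + Real.log L := by
        rw [Real.log_mul (by norm_num) (by positivity),
          Real.log_mul (by positivity) (ne_of_gt hLpos)]
        ring
      linarith
    have hlog2mpos : 0 < Real.log (2 * (m:ℝ)) := by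
      have h5 : Real.log 2 ≤ Real.log (2 * (m:ℝ)) := Real.log_le_log (by norm_num) (by linarith)
      linarith
    have hcast : ((Nat.count Nat.Prime (2 * m + 1) : ℝ) + 1) ≤ (n:ℝ) + 1 := by
      have : (Nat.count Nat.Prime (2 * m + 1) : ℝ) ≤ (n:ℝ) := by exact_mod_cast hcon
      linarith
    have hmain : ((m:ℝ)) * (2 * Real.log 2) ≤ ((n:ℝ) + 1) * Real.log (2 * (m:ℝ)) :=
      hlog.trans (mul_le_mul_of_nonneg_right hcast hlog2mpos.le)
    have hrhs : ((n:ℝ) + 1) * Real.log (2 * (m:ℝ))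
        ≤ ((n:ℝ) + 1) * (Real.log 2 + (L + 1/((n:ℝ)-1)) + (L/8 + (3 * Real.log 2 - 1))) := by
      apply mul_le_mul_of_nonneg_left _ (by linarith)
      linarith
    have hfrac : 1 / ((n:ℝ) - 1) ≤ 1 / 1024 := one_div_le_one_div_of_le (by norm_num) hx1
    have huv : 0 ≤ ((n:ℝ) - 1025) * (L - 6.931471803) :=
      mul_nonneg (by linarith) (by linarith)
    nlinarith [hmain, hrhs, hmgt, hfrac, huv, l2lo, l2hi]
  have hnth := Nat.nth_lt_of_lt_count hcount
  have hne : Nat.nth Nat.Prime n ≠ 2 * m := by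
    intro heq
    have hp := Nat.prime_nth_prime n
    rw [heq] at hp
    have hdvd : 2 ∣ 2 * m := ⟨m, rfl⟩
    have h2 : 2 * m = 2 :=
      ((Nat.Prime.eq_one_or_self_of_dvd hp 2 hdvd).resolve_left (by norm_num)).symm
    have := Nat.add_two_le_nth_prime n
    omega
  have hlt : Nat.nth Nat.Prime n < 2 * m := by omega
  have hltr : (Nat.nth Nat.Prime n : ℝ) < 2 * (m:ℝ) := by exact_mod_cast hlt
  rw [← hLdef]
  calc (Nat.nth Nat.Prime n : ℝ) < 2 * (m:ℝ) := hltr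
    _ ≤ 2 * ((n:ℝ) * L) := by linarith
    _ = 2 * (n:ℝ) * L := by ring

def sortedChk : List ℕ → Bool
  | [] => true
  | [_] => true
  | a :: b :: t => decide (a < b) && sortedChk (b :: t)

lemma sortedChk_chain' : ∀ l : List ℕ, sortedChk l = true → l.Chain' (· < ·)
  | [], _ => List.isChain_nil
  | [a], _ => List.isChain_singleton a
  | a :: b :: t, h => by
      have h' : (decide (a < b) && sortedChk (b :: t)) = true := h
      rw [Bool.and_eq_true] at h'
      exact List.isChain_cons_cons.mpr ⟨of_decide_eq_true h'.1, sortedChk_chain' (b :: t) h'.2⟩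

lemma nodup_of_sortedChk {l : List ℕ} (h : sortedChk l = true) : l.Nodup :=
  (List.isChain_iff_pairwise.mp (sortedChk_chain' l h)).imp (fun h => Nat.ne_of_lt h)

def allLt (y : ℕ) : List ℕ → Bool
  | [] => true
  | a :: t => decide (a < y) && allLt y t

lemma allLt_spec (y : ℕ) : ∀ l : List ℕ, allLt y l = true → ∀ x ∈ l, x < y
  | [], _, x, hx => by simp at hx
  | a :: t, h, x, hx => by
      have h' : (decide (a < y) && allLt y t) = true := h
      rw [Bool.and_eq_true] at h'
      rcases List.mem_cons.mp hx with rfl | hx'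
      · exact of_decide_eq_true h'.1
      · exact allLt_spec y t h'.2 x hx'

lemma aux_count_ge (y : ℕ) (l : List ℕ) (hnd : l.Nodup)
    (hp : ∀ x ∈ l, Nat.Prime x) (hlt : ∀ x ∈ l, x < y) :
    l.length ≤ Nat.count Nat.Prime y := by
  rw [Nat.count_eq_card_filter_range, ← List.toFinset_card_of_nodup hnd]
  apply Finset.card_le_card
  intro x hx
  rw [List.mem_toFinset] at hx
  rw [Finset.mem_filter, Finset.mem_range]
  exact ⟨hlt x hx, hp x hx⟩

lemma nth_le_take (L : List ℕ) (hnd : L.Nodup) (hp : ∀ x ∈ L, Nat.Prime x)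
    (b P : ℕ) (hlen : b + 1 ≤ L.length)
    (hlt : allLt (P+1) (L.take (b+1)) = true) : Nat.nth Nat.Prime b ≤ P := by
  have hnd' : (L.take (b+1)).Nodup := (List.take_sublist _ _).nodup hnd
  have hp' : ∀ x ∈ L.take (b+1), Nat.Prime x := fun x hx => hp x (List.take_subset _ _ hx)
  have h := aux_count_ge (P+1) (L.take (b+1)) hnd' hp' (allLt_spec _ _ hlt)
  rw [List.length_take, min_eq_left hlen] at h
  exact Nat.lt_succ_iff.mp (Nat.nth_lt_of_lt_count (lt_of_lt_of_le (Nat.lt_succ_self b) h))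

lemma aux_interval (a b P n k : ℕ) (ha : 2 ≤ a) (han : a ≤ n) (hnb : n ≤ b)
    (hnth : Nat.nth Nat.Prime b ≤ P)
    (hnum : (P:ℝ) < 2 * a * ((k:ℝ) * 0.6931471803 + 1 - 2 ^ k / ((a:ℝ) - 1))) :
    (Nat.nth Nat.Prime n : ℝ) < 2 * n * Real.log ((n:ℝ) - 1) := by
  have ha2 : (2:ℝ) ≤ (a:ℝ) := by exact_mod_cast ha
  have ha1 : (1:ℝ) ≤ (a:ℝ) - 1 := by linarith
  have hla : (k:ℝ) * 0.6931471803 + 1 - 2 ^ k / ((a:ℝ)-1) ≤ Real.log ((a:ℝ)-1) :=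
    aux_log_ge k _ (by linarith)
  have hnn : (a:ℝ) ≤ (n:ℝ) := by exact_mod_cast han
  have hmono : Real.log ((a:ℝ)-1) ≤ Real.log ((n:ℝ)-1) :=
    Real.log_le_log (by linarith) (by linarith)
  have hloga : 0 ≤ Real.log ((a:ℝ)-1) := Real.log_nonneg ha1
  have h1 : Nat.nth Nat.Prime n ≤ P :=
    le_trans ((Nat.nth_le_nth Nat.infinite_setOf_prime).mpr hnb) hnth
  have h1r : (Nat.nth Nat.Prime n : ℝ) ≤ (P:ℝ) := by exact_mod_cast h1
  have h2 : 2 * (a:ℝ) * Real.log ((a:ℝ)-1) ≤ 2 * (n:ℝ) * Real.log ((n:ℝ)-1) :=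
    mul_le_mul (by linarith) hmono hloga (by linarith)
  have h3 : 2 * (a:ℝ) * ((k:ℝ) * 0.6931471803 + 1 - 2 ^ k / ((a:ℝ)-1))
      ≤ 2 * (a:ℝ) * Real.log ((a:ℝ)-1) :=
    mul_le_mul_of_nonneg_left hla (by positivity)
  linarith

lemma hpc0 : ∀ x ∈ ([2, 3, 5, 7, 11, 13, 17, 19, 23, 29, 31, 37, 41, 43, 47, 53, 59, 61, 67, 71, 73, 79, 83, 89, 97, 101, 103, 107, 109, 113, 127, 131, 137, 139, 149, 151, 157, 163, 167, 173, 179, 181, 191, 193, 197, 199, 211, 223, 227, 229, 233, 239, 241, 251, 257, 263, 269, 271, 277, 281, 283, 293, 307, 311, 313, 317, 331, 337, 347, 349, 353, 359, 367, 373, 379, 383, 389, 397, 401, 409, 419, 421, 431, 433, 439, 443, 449, 457, 461, 463, 467, 479, 487, 491, 499, 503, 509, 521, 523, 541, 547, 557, 563, 569, 571, 577, 587, 593, 599, 601, 607, 613, 617, 619, 631, 641, 643, 647, 653, 659, 661, 673, 677, 683, 691, 701, 709, 719, 727, 733, 739, 743, 751, 757, 761, 769, 773, 787, 797, 809, 811,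 821, 823, 827, 829, 839, 853, 857, 859, 863, 877, 881, 883, 887, 907, 911, 919, 929, 937, 941, 947, 953, 967, 971, 977, 983, 991, 997, 1009, 1013, 1019, 1021, 1031, 1033, 1039, 1049, 1051, 1061, 1063, 1069] : List ℕ), Nat.Prime x := by
  simp only [List.forall_mem_cons, List.forall_mem_nil]
  norm_num
lemma hpc1 : ∀ x ∈ ([1087, 1091, 1093, 1097, 1103, 1109, 1117, 1123, 1129, 1151, 1153, 1163, 1171, 1181, 1187, 1193, 1201, 1213, 1217, 1223, 1229, 1231, 1237, 1249, 1259, 1277, 1279, 1283, 1289, 1291, 1297, 1301, 1303, 1307, 1319, 1321, 1327, 1361, 1367, 1373, 1381, 1399, 1409, 1423, 1427, 1429, 1433, 1439, 1447, 1451, 1453, 1459, 1471, 1481, 1483, 1487, 1489, 1493, 1499, 1511, 1523, 1531, 1543, 1549, 1553, 1559, 1567, 1571, 1579, 1583, 1597, 1601, 1607, 1609, 1613, 1619, 1621, 1627, 1637, 1657, 1663, 1667, 1669, 1693, 1697, 1699, 1709, 1721, 1723, 1733, 1741, 1747, 1753, 1759, 1777, 1783, 1787, 1789, 1801, 1811,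 1823, 1831, 1847, 1861, 1867, 1871, 1873, 1877, 1879, 1889, 1901, 1907, 1913, 1931, 1933, 1949, 1951, 1973, 1979, 1987, 1993, 1997, 1999, 2003, 2011, 2017, 2027, 2029, 2039, 2053, 2063, 2069, 2081, 2083, 2087, 2089, 2099, 2111, 2113, 2129, 2131, 2137, 2141, 2143, 2153, 2161, 2179, 2203, 2207, 2213, 2221, 2237, 2239, 2243, 2251, 2267, 2269, 2273, 2281, 2287, 2293, 2297, 2309, 2311, 2333, 2339, 2341, 2347, 2351, 2357, 2371, 2377, 2381, 2383, 2389, 2393, 2399, 2411, 2417, 2423] : List ℕ), Nat.Prime x := by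
  simp only [List.forall_mem_cons, List.forall_mem_nil]
  norm_num
lemma hpc2 : ∀ x ∈ ([2437, 2441, 2447, 2459, 2467, 2473, 2477, 2503, 2521, 2531, 2539, 2543, 2549, 2551, 2557, 2579, 2591, 2593, 2609, 2617, 2621, 2633, 2647, 2657, 2659, 2663, 2671, 2677, 2683, 2687, 2689, 2693, 2699, 2707, 2711, 2713, 2719, 2729, 2731, 2741, 2749, 2753, 2767, 2777, 2789, 2791, 2797, 2801, 2803, 2819, 2833, 2837, 2843, 2851, 2857, 2861, 2879, 2887, 2897, 2903, 2909, 2917, 2927, 2939, 2953, 2957, 2963, 2969, 2971, 2999, 3001, 3011, 3019, 3023, 3037, 3041, 3049, 3061, 3067, 3079, 3083, 3089, 3109, 3119, 3121, 3137, 3163, 3167, 3169, 3181, 3187, 3191, 3203, 3209, 3217, 3221, 3229, 3251, 3253, 3257, 3259, 3271, 3299, 3301, 3307, 3313, 3319, 3323, 3329, 3331, 3343, 3347, 3359, 3361, 3371, 3373, 3389, 3391, 3407, 3413, 3433, 3449, 3457, 3461, 3463, 3467, 3469, 3491, 3499, 3511, 3517, 3527, 3529, 3533, 3539, 3541, 3547,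 3557, 3559, 3571, 3581, 3583, 3593, 3607, 3613, 3617, 3623, 3631, 3637, 3643, 3659, 3671, 3673, 3677, 3691, 3697, 3701, 3709, 3719, 3727, 3733, 3739, 3761, 3767, 3769, 3779, 3793, 3797, 3803, 3821, 3823, 3833, 3847, 3851, 3853, 3863, 3877, 3881, 3889, 3907] : List ℕ), Nat.Prime x := by
  simp only [List.forall_mem_cons, List.forall_mem_nil]
  norm_num
lemma hpc3 : ∀ x ∈ ([3911, 3917, 3919, 3923, 3929, 3931, 3943, 3947, 3967, 3989, 4001, 4003, 4007, 4013, 4019, 4021, 4027, 4049, 4051, 4057, 4073, 4079, 4091, 4093, 4099, 4111, 4127, 4129, 4133, 4139, 4153, 4157, 4159, 4177, 4201, 4211, 4217, 4219, 4229, 4231, 4241, 4243, 4253, 4259, 4261, 4271, 4273, 4283, 4289, 4297, 4327, 4337, 4339, 4349, 4357, 4363, 4373, 4391, 4397, 4409, 4421, 4423, 4441, 4447, 4451, 4457, 4463, 4481, 4483, 4493, 4507, 4513, 4517, 4519, 4523, 4547, 4549, 4561, 4567, 4583, 4591, 4597, 4603, 4621, 4637, 4639, 4643, 4649, 4651, 4657,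 4663, 4673, 4679, 4691, 4703, 4721, 4723, 4729, 4733, 4751, 4759, 4783, 4787, 4789, 4793, 4799, 4801, 4813, 4817, 4831, 4861, 4871, 4877, 4889, 4903, 4909, 4919, 4931, 4933, 4937, 4943, 4951, 4957, 4967, 4969, 4973, 4987, 4993, 4999, 5003, 5009, 5011, 5021, 5023, 5039, 5051, 5059, 5077, 5081, 5087, 5099, 5101, 5107, 5113, 5119, 5147, 5153, 5167, 5171, 5179, 5189, 5197, 5209, 5227, 5231, 5233, 5237, 5261, 5273, 5279, 5281, 5297, 5303, 5309, 5323, 5333, 5347, 5351, 5381, 5387, 5393, 5399, 5407, 5413, 5417, 5419, 5431, 5437, 5441, 5443] : List ℕ), Nat.Prime x := by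
  simp only [List.forall_mem_cons, List.forall_mem_nil]
  norm_num
lemma hpc4 : ∀ x ∈ ([5449, 5471, 5477, 5479, 5483, 5501, 5503, 5507, 5519, 5521, 5527, 5531, 5557, 5563, 5569, 5573, 5581, 5591, 5623, 5639, 5641, 5647, 5651, 5653, 5657, 5659, 5669, 5683, 5689, 5693, 5701, 5711, 5717, 5737, 5741, 5743, 5749, 5779, 5783, 5791, 5801, 5807, 5813, 5821, 5827, 5839, 5843, 5849, 5851, 5857, 5861, 5867, 5869, 5879, 5881, 5897, 5903, 5923, 5927, 5939, 5953, 5981, 5987, 6007, 6011, 6029, 6037, 6043, 6047, 6053, 6067, 6073, 6079, 6089, 6091, 6101, 6113, 6121, 6131, 6133, 6143, 6151, 6163, 6173, 6197, 6199, 6203, 6211, 6217, 6221, 6229, 6247, 6257, 6263, 6269, 6271, 6277, 6287, 6299, 6301, 6311, 6317, 6323, 6329, 6337, 6343, 6353, 6359, 6361, 6367, 6373, 6379, 6389, 6397, 6421, 6427, 6449, 6451, 6469, 6473, 6481, 6491, 6521, 6529, 6547, 6551, 6553, 6563, 6569, 6571, 6577, 6581, 6599, 6607, 6619, 6637, 6653,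 6659, 6661, 6673, 6679, 6689, 6691, 6701, 6703, 6709, 6719, 6733, 6737, 6761, 6763, 6779, 6781, 6791, 6793, 6803, 6823, 6827, 6829, 6833, 6841, 6857, 6863, 6869, 6871, 6883, 6899, 6907, 6911, 6917, 6947, 6949, 6959, 6961, 6967, 6971, 6977, 6983, 6991, 6997] : List ℕ), Nat.Prime x := by
  simp only [List.forall_mem_cons, List.forall_mem_nil]
  norm_num
lemma hpc5 : ∀ x ∈ ([7001, 7013, 7019, 7027, 7039, 7043, 7057, 7069, 7079, 7103, 7109, 7121, 7127, 7129, 7151, 7159, 7177, 7187, 7193, 7207, 7211, 7213, 7219, 7229, 7237, 7243, 7247, 7253, 7283, 7297, 7307, 7309, 7321, 7331, 7333, 7349, 7351, 7369, 7393, 7411, 7417, 7433, 7451, 7457, 7459, 7477, 7481, 7487, 7489, 7499, 7507, 7517, 7523, 7529, 7537, 7541, 7547, 7549, 7559, 7561, 7573, 7577, 7583, 7589, 7591, 7603, 7607, 7621, 7639, 7643, 7649, 7669, 7673, 7681, 7687, 7691, 7699, 7703, 7717, 7723, 7727, 7741, 7753, 7757, 7759, 7789, 7793, 7817, 7823, 7829,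 7841, 7853, 7867, 7873, 7877, 7879, 7883, 7901, 7907, 7919, 7927, 7933, 7937, 7949, 7951, 7963, 7993, 8009, 8011, 8017, 8039, 8053, 8059, 8069, 8081, 8087, 8089, 8093, 8101, 8111, 8117, 8123, 8147, 8161, 8167, 8171, 8179, 8191, 8209, 8219, 8221, 8231, 8233, 8237, 8243, 8263, 8269, 8273, 8287, 8291, 8293, 8297, 8311, 8317, 8329, 8353, 8363, 8369, 8377, 8387, 8389, 8419, 8423, 8429, 8431, 8443, 8447, 8461, 8467, 8501, 8513, 8521, 8527, 8537, 8539, 8543, 8563, 8573, 8581, 8597, 8599, 8609, 8623, 8627, 8629, 8641] : List ℕ), Nat.Prime x := by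
  simp only [List.forall_mem_cons, List.forall_mem_nil]
  norm_num
def PL : List ℕ := [2, 3, 5, 7, 11, 13, 17, 19, 23, 29, 31, 37, 41, 43, 47, 53, 59, 61, 67, 71, 73, 79, 83, 89, 97, 101, 103, 107, 109, 113, 127, 131, 137, 139, 149, 151, 157, 163, 167, 173, 179, 181, 191, 193, 197, 199, 211, 223, 227, 229, 233, 239, 241, 251, 257, 263, 269, 271, 277, 281, 283, 293, 307, 311, 313, 317, 331, 337, 347, 349, 353, 359, 367, 373, 379, 383, 389, 397, 401, 409, 419, 421, 431, 433, 439, 443, 449, 457, 461, 463, 467, 479, 487, 491, 499, 503, 509, 521, 523, 541, 547, 557, 563, 569, 571, 577, 587, 593, 599, 601, 607, 613, 617, 619, 631, 641, 643, 647, 653, 659, 661, 673, 677, 683, 691, 701, 709, 719, 727, 733, 739, 743, 751, 757, 761, 769, 773, 787, 797, 809, 811, 821, 823, 827, 829, 839, 853, 857, 859, 863, 877, 881, 883, 887, 907, 911, 919, 929, 937, 941, 947, 953, 967, 971, 977, 983, 991, 997, 1009, 1013, 1019, 1021, 1031, 1033, 1039, 1049, 1051, 1061, 1063, 1069] ++ ([1087,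 1091, 1093, 1097, 1103, 1109, 1117, 1123, 1129, 1151, 1153, 1163, 1171, 1181, 1187, 1193, 1201, 1213, 1217, 1223, 1229, 1231, 1237, 1249, 1259, 1277, 1279, 1283, 1289, 1291, 1297, 1301, 1303, 1307, 1319, 1321, 1327, 1361, 1367, 1373, 1381, 1399, 1409, 1423, 1427, 1429, 1433, 1439, 1447, 1451, 1453, 1459, 1471, 1481, 1483, 1487, 1489, 1493, 1499, 1511, 1523, 1531, 1543, 1549, 1553, 1559, 1567, 1571, 1579, 1583, 1597, 1601, 1607, 1609, 1613, 1619, 1621, 1627, 1637, 1657, 1663, 1667, 1669, 1693, 1697, 1699, 1709, 1721, 1723, 1733, 1741, 1747, 1753, 1759, 1777, 1783, 1787, 1789, 1801, 1811, 1823, 1831, 1847, 1861, 1867, 1871, 1873, 1877, 1879, 1889, 1901, 1907, 1913, 1931, 1933, 1949, 1951, 1973, 1979, 1987, 1993, 1997, 1999, 2003, 2011, 2017, 2027, 2029, 2039, 2053, 2063, 2069, 2081, 2083, 2087, 2089, 2099, 2111, 2113, 2129, 2131, 2137, 2141, 2143, 2153, 2161, 2179, 2203, 2207, 2213, 2221,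 2237, 2239, 2243, 2251, 2267, 2269, 2273, 2281, 2287, 2293, 2297, 2309, 2311, 2333, 2339, 2341, 2347, 2351, 2357, 2371, 2377, 2381, 2383, 2389, 2393, 2399, 2411, 2417, 2423] ++ ([2437, 2441, 2447, 2459, 2467, 2473, 2477, 2503, 2521, 2531, 2539, 2543, 2549, 2551, 2557, 2579, 2591, 2593, 2609, 2617, 2621, 2633, 2647, 2657, 2659, 2663, 2671, 2677, 2683, 2687, 2689, 2693, 2699, 2707, 2711, 2713, 2719, 2729, 2731, 2741, 2749, 2753, 2767, 2777, 2789, 2791, 2797, 2801, 2803, 2819, 2833, 2837, 2843, 2851, 2857, 2861, 2879, 2887, 2897, 2903, 2909, 2917, 2927, 2939, 2953, 2957, 2963, 2969, 2971, 2999, 3001, 3011, 3019, 3023, 3037, 3041, 3049, 3061, 3067, 3079, 3083, 3089, 3109, 3119, 3121, 3137, 3163, 3167, 3169, 3181, 3187, 3191, 3203, 3209, 3217, 3221, 3229, 3251, 3253, 3257, 3259, 3271, 3299, 3301, 3307, 3313, 3319, 3323, 3329, 3331, 3343, 3347, 3359, 3361, 3371, 3373, 3389, 3391, 3407, 3413,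 3433, 3449, 3457, 3461, 3463, 3467, 3469, 3491, 3499, 3511, 3517, 3527, 3529, 3533, 3539, 3541, 3547, 3557, 3559, 3571, 3581, 3583, 3593, 3607, 3613, 3617, 3623, 3631, 3637, 3643, 3659, 3671, 3673, 3677, 3691, 3697, 3701, 3709, 3719, 3727, 3733, 3739, 3761, 3767, 3769, 3779, 3793, 3797, 3803, 3821, 3823, 3833, 3847, 3851, 3853, 3863, 3877, 3881, 3889, 3907] ++ ([3911, 3917, 3919, 3923, 3929, 3931, 3943, 3947, 3967, 3989, 4001, 4003, 4007, 4013, 4019, 4021, 4027, 4049, 4051, 4057, 4073, 4079, 4091, 4093, 4099, 4111, 4127, 4129, 4133, 4139, 4153, 4157, 4159, 4177, 4201, 4211, 4217, 4219, 4229, 4231, 4241, 4243, 4253, 4259, 4261, 4271, 4273, 4283, 4289, 4297, 4327, 4337, 4339, 4349, 4357, 4363, 4373, 4391, 4397, 4409, 4421, 4423, 4441, 4447, 4451, 4457, 4463, 4481, 4483, 4493, 4507, 4513, 4517, 4519, 4523, 4547, 4549, 4561, 4567, 4583, 4591, 4597, 4603, 4621, 4637, 4639, 4643, 4649, 4651,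 4657, 4663, 4673, 4679, 4691, 4703, 4721, 4723, 4729, 4733, 4751, 4759, 4783, 4787, 4789, 4793, 4799, 4801, 4813, 4817, 4831, 4861, 4871, 4877, 4889, 4903, 4909, 4919, 4931, 4933, 4937, 4943, 4951, 4957, 4967, 4969, 4973, 4987, 4993, 4999, 5003, 5009, 5011, 5021, 5023, 5039, 5051, 5059, 5077, 5081, 5087, 5099, 5101, 5107, 5113, 5119, 5147, 5153, 5167, 5171, 5179, 5189, 5197, 5209, 5227, 5231, 5233, 5237, 5261, 5273, 5279, 5281, 5297, 5303, 5309, 5323, 5333, 5347, 5351, 5381, 5387, 5393, 5399, 5407, 5413, 5417, 5419, 5431, 5437, 5441, 5443] ++ ([5449, 5471, 5477, 5479, 5483, 5501, 5503, 5507, 5519, 5521, 5527, 5531, 5557, 5563, 5569, 5573, 5581, 5591, 5623, 5639, 5641, 5647, 5651, 5653, 5657, 5659, 5669, 5683, 5689, 5693, 5701, 5711, 5717, 5737, 5741, 5743, 5749, 5779, 5783, 5791, 5801, 5807, 5813, 5821, 5827, 5839, 5843, 5849, 5851, 5857, 5861, 5867, 5869, 5879, 5881, 5897, 5903, 5923,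 5927, 5939, 5953, 5981, 5987, 6007, 6011, 6029, 6037, 6043, 6047, 6053, 6067, 6073, 6079, 6089, 6091, 6101, 6113, 6121, 6131, 6133, 6143, 6151, 6163, 6173, 6197, 6199, 6203, 6211, 6217, 6221, 6229, 6247, 6257, 6263, 6269, 6271, 6277, 6287, 6299, 6301, 6311, 6317, 6323, 6329, 6337, 6343, 6353, 6359, 6361, 6367, 6373, 6379, 6389, 6397, 6421, 6427, 6449, 6451, 6469, 6473, 6481, 6491, 6521, 6529, 6547, 6551, 6553, 6563, 6569, 6571, 6577, 6581, 6599, 6607, 6619, 6637, 6653, 6659, 6661, 6673, 6679, 6689, 6691, 6701, 6703, 6709, 6719, 6733, 6737, 6761, 6763, 6779, 6781, 6791, 6793, 6803, 6823, 6827, 6829, 6833, 6841, 6857, 6863, 6869, 6871, 6883, 6899, 6907, 6911, 6917, 6947, 6949, 6959, 6961, 6967, 6971, 6977, 6983, 6991, 6997] ++ ([7001, 7013, 7019, 7027, 7039, 7043, 7057, 7069, 7079, 7103, 7109, 7121, 7127, 7129, 7151, 7159, 7177, 7187, 7193, 7207, 7211, 7213, 7219, 7229, 7237, 7243, 7247,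 7253, 7283, 7297, 7307, 7309, 7321, 7331, 7333, 7349, 7351, 7369, 7393, 7411, 7417, 7433, 7451, 7457, 7459, 7477, 7481, 7487, 7489, 7499, 7507, 7517, 7523, 7529, 7537, 7541, 7547, 7549, 7559, 7561, 7573, 7577, 7583, 7589, 7591, 7603, 7607, 7621, 7639, 7643, 7649, 7669, 7673, 7681, 7687, 7691, 7699, 7703, 7717, 7723, 7727, 7741, 7753, 7757, 7759, 7789, 7793, 7817, 7823, 7829, 7841, 7853, 7867, 7873, 7877, 7879, 7883, 7901, 7907, 7919, 7927, 7933, 7937, 7949, 7951, 7963, 7993, 8009, 8011, 8017, 8039, 8053, 8059, 8069, 8081, 8087, 8089, 8093, 8101, 8111, 8117, 8123, 8147, 8161, 8167, 8171, 8179, 8191, 8209, 8219, 8221, 8231, 8233, 8237, 8243, 8263, 8269, 8273, 8287, 8291, 8293, 8297, 8311, 8317, 8329, 8353, 8363, 8369, 8377, 8387, 8389, 8419, 8423, 8429, 8431, 8443, 8447, 8461, 8467, 8501, 8513, 8521, 8527, 8537, 8539, 8543, 8563, 8573, 8581, 8597, 8599, 8609, 8623, 8627, 8629, 8641])))))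
lemma hpPL : ∀ x ∈ PL, Nat.Prime x := by
  intro x hx
  simp only [PL, List.mem_append] at hx
  rcases hx with h|h|h|h|h|h
  exacts [hpc0 x h, hpc1 x h, hpc2 x h, hpc3 x h, hpc4 x h, hpc5 x h]
lemma hndPL : PL.Nodup := nodup_of_sortedChk (by decide)
lemma hlenPL : PL.length = 1076 := by decide
lemma hnth0 : Nat.nth Nat.Prime 7 ≤ 19 :=
  nth_le_take PL hndPL hpPL 7 19 (by rw [hlenPL]; try norm_num) (by decide)
lemma hnth1 : Nat.nth Nat.Prime 9 ≤ 29 :=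
  nth_le_take PL hndPL hpPL 9 29 (by rw [hlenPL]; try norm_num) (by decide)
lemma hnth2 : Nat.nth Nat.Prime 13 ≤ 43 :=
  nth_le_take PL hndPL hpPL 13 43 (by rw [hlenPL]; try norm_num) (by decide)
lemma hnth3 : Nat.nth Nat.Prime 19 ≤ 71 :=
  nth_le_take PL hndPL hpPL 19 71 (by rw [hlenPL]; try norm_num) (by decide)
lemma hnth4 : Nat.nth Nat.Prime 29 ≤ 113 :=
  nth_le_take PL hndPL hpPL 29 113 (by rw [hlenPL]; try norm_num) (by decide)
lemma hnth5 : Nat.nth Nat.Prime 45 ≤ 199 :=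
  nth_le_take PL hndPL hpPL 45 199 (by rw [hlenPL]; try norm_num) (by decide)
lemma hnth6 : Nat.nth Nat.Prime 67 ≤ 337 :=
  nth_le_take PL hndPL hpPL 67 337 (by rw [hlenPL]; try norm_num) (by decide)
lemma hnth7 : Nat.nth Nat.Prime 104 ≤ 571 :=
  nth_le_take PL hndPL hpPL 104 571 (by rw [hlenPL]; try norm_num) (by decide)
lemma hnth8 : Nat.nth Nat.Prime 162 ≤ 967 :=
  nth_le_take PL hndPL hpPL 162 967 (by rw [hlenPL]; try norm_num) (by decide)
lemma hnth9 : Nat.nth Nat.Prime 258 ≤ 1637 :=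
  nth_le_take PL hndPL hpPL 258 1637 (by rw [hlenPL]; try norm_num) (by decide)
lemma hnth10 : Nat.nth Nat.Prime 415 ≤ 2861 :=
  nth_le_take PL hndPL hpPL 415 2861 (by rw [hlenPL]; try norm_num) (by decide)
lemma hnth11 : Nat.nth Nat.Prime 667 ≤ 4993 :=
  nth_le_take PL hndPL hpPL 667 4993 (by rw [hlenPL]; try norm_num) (by decide)
lemma hnth12 : Nat.nth Nat.Prime 1075 ≤ 8641 :=
  nth_le_take PL hndPL hpPL 1075 8641 (by rw [hlenPL]; try norm_num) (by decide)

end Aux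

theorem stmt_3 (n : ℕ) (hn : 6 ≤ n) :
    (p (n + 1) : ℝ) < 2 * n * Real.log ((n : ℝ) - 1) := by
  have hp1 : p (n + 1) = Nat.nth Nat.Prime n := by simp [p]
  rw [hp1]
  rcases le_or_gt 1025 n with hbig | hsmall
  · exact aux_asymp n hbig
  · -- n ≤ 1024
    rcases le_or_gt n 7 with h0 | h0
    · exact aux_interval 6 7 19 n 2 (by norm_num) (by omega) h0 hnth0 (by norm_num)
    rcases le_or_gt n 9 with h1 | h1
    · exact aux_interval 8 9 29 n 3 (by norm_num) (by omega) h1 hnth1 (by norm_num)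
    rcases le_or_gt n 13 with h2 | h2
    · exact aux_interval 10 13 43 n 3 (by norm_num) (by omega) h2 hnth2 (by norm_num)
    rcases le_or_gt n 19 with h3 | h3
    · exact aux_interval 14 19 71 n 4 (by norm_num) (by omega) h3 hnth3 (by norm_num)
    rcases le_or_gt n 29 with h4 | h4
    · exact aux_interval 20 29 113 n 4 (by norm_num) (by omega) h4 hnth4 (by norm_num)
    rcases le_or_gt n 45 with h5 | h5
    · exact aux_interval 30 45 199 n 5 (by norm_num) (by omega) h5 hnth5 (by norm_num)
    rcases le_or_gt n 67 with h6 | h6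
    · exact aux_interval 46 67 337 n 5 (by norm_num) (by omega) h6 hnth6 (by norm_num)
    rcases le_or_gt n 104 with h7 | h7
    · exact aux_interval 68 104 571 n 6 (by norm_num) (by omega) h7 hnth7 (by norm_num)
    rcases le_or_gt n 162 with h8 | h8
    · exact aux_interval 105 162 967 n 7 (by norm_num) (by omega) h8 hnth8 (by norm_num)
    rcases le_or_gt n 258 with h9 | h9
    · exact aux_interval 163 258 1637 n 7 (by norm_num) (by omega) h9 hnth9 (by norm_num)
    rcases le_or_gt n 415 with h10 | h10
    · exact aux_interval 259 415 2861 n 8 (by norm_num) (by omega) h10 hnth10 (by norm_num)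
    rcases le_or_gt n 667 with h11 | h11
    · exact aux_interval 416 667 4993 n 9 (by norm_num) (by omega) h11 hnth11 (by norm_num)
    exact aux_interval 668 1075 8641 n 9 (by norm_num) (by omega) (by omega) hnth12 (by norm_num)
end

section
/- For all positive integers n with n ≥ 22, one has B_{n-1} < 49/30 + log²(n − 1) − log²(4) + 2 log(n − 1). -/
open Finset Real

/-- `B k = ∑_{i=2}^{k} g i / (i - 1)`. -/
noncomputable def B (k : ℕ) : ℝ := ∑ i ∈ Finset.Icc 2 k, (g i : ℝ) / ((i : ℝ) - 1)

/- ## Auxiliary: polynomial bounds on the logarithm -/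

lemma log_cubic_ub {x : ℝ} (hx : 0 ≤ x) : Real.log (1+x) ≤ x - x^2/2 + x^3/3 := by
  have key : ∀ y ∈ Set.Ici (0:ℝ), HasDerivAt (fun z => z - z^2/2 + z^3/3 - Real.log (1+z))
      (1 - y + y^2 - 1/(1+y)) y := by
    intro y hy
    simp only [Set.mem_Ici] at hy
    have h1 : (0:ℝ) < 1 + y := by linarith
    have hlog : HasDerivAt (fun z : ℝ => Real.log (1+z)) (1/(1+y)) y := by
      have := (Real.hasDerivAt_log h1.ne').comp y ((hasDerivAt_id y).const_add 1)
      simpa [one_div, Function.comp_def] using this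
    have hpoly : HasDerivAt (fun z : ℝ => z - z^2/2 + z^3/3) (1 - y + y^2) y := by
      have h := ((hasDerivAt_id y).sub (((hasDerivAt_pow 2 y)).div_const 2)).add
        (((hasDerivAt_pow 3 y)).div_const 3)
      exact h.congr_deriv (by ring)
    exact hpoly.sub hlog
  have mono : MonotoneOn (fun z : ℝ => z - z^2/2 + z^3/3 - Real.log (1+z)) (Set.Ici 0) := by
    apply monotoneOn_of_hasDerivWithinAt_nonneg (convex_Ici 0)
      (fun y hy => (key y hy).continuousAt.continuousWithinAt)
      (fun y hy => ((key y (interior_subset hy)).hasDerivWithinAt))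
    intro y hy
    simp only [interior_Ici, Set.mem_Ioi] at hy
    have h1 : (0:ℝ) < 1 + y := by linarith
    have : 1/(1+y) ≤ 1 - y + y^2 := by
      rw [div_le_iff₀ h1]; nlinarith
    linarith
  have := mono (Set.mem_Ici.2 le_rfl) (Set.mem_Ici.2 hx) hx
  simpa using this

lemma log_cubic_lb {x : ℝ} (hx : 0 ≤ x) : x - x^2/2 + x^3/3 - x^4/4 ≤ Real.log (1+x) := by
  have key : ∀ y ∈ Set.Ici (0:ℝ), HasDerivAt (fun z => Real.log (1+z) - (z - z^2/2 + z^3/3 - z^4/4))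
      (1/(1+y) - (1 - y + y^2 - y^3)) y := by
    intro y hy
    simp only [Set.mem_Ici] at hy
    have h1 : (0:ℝ) < 1 + y := by linarith
    have hlog : HasDerivAt (fun z : ℝ => Real.log (1+z)) (1/(1+y)) y := by
      have := (Real.hasDerivAt_log h1.ne').comp y ((hasDerivAt_id y).const_add 1)
      simpa [one_div, Function.comp_def] using this
    have hpoly : HasDerivAt (fun z : ℝ => z - z^2/2 + z^3/3 - z^4/4) (1 - y + y^2 - y^3) y := by
      have h := (((hasDerivAt_id y).sub (((hasDerivAt_pow 2 y)).div_const 2)).add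
        (((hasDerivAt_pow 3 y)).div_const 3)).sub (((hasDerivAt_pow 4 y)).div_const 4)
      exact h.congr_deriv (by ring)
    exact hlog.sub hpoly
  have mono : MonotoneOn (fun z : ℝ => Real.log (1+z) - (z - z^2/2 + z^3/3 - z^4/4)) (Set.Ici 0) := by
    apply monotoneOn_of_hasDerivWithinAt_nonneg (convex_Ici 0)
      (fun y hy => (key y hy).continuousAt.continuousWithinAt)
      (fun y hy => ((key y (interior_subset hy)).hasDerivWithinAt))
    intro y hy
    simp only [interior_Ici, Set.mem_Ioi] at hy
    have h1 : (0:ℝ) < 1 + y := by linarith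
    have h2 : 1 - y + y^2 - y^3 ≤ 1/(1+y) := by
      rw [le_div_iff₀ h1]; nlinarith
    linarith
  have := mono (Set.mem_Ici.2 le_rfl) (Set.mem_Ici.2 hx) hx
  simp only [add_zero, Real.log_one] at this
  linarith [this]

lemma log_tangent {x c : ℝ} (hx : 0 < x) (hc : 0 < c) : Real.log x ≤ x/c + (Real.log c - 1) := by
  have h := Real.log_le_sub_one_of_pos (show 0 < x/c by positivity)
  have h2 : Real.log (x/c) = Real.log x - Real.log c := Real.log_div hx.ne' hc.ne'
  rw [h2] at h; linarith

lemma log_refl_lb {x c : ℝ} (hx : 0 < x) (hc : 0 < c) : Real.log c + (1 - c/x) ≤ Real.log x := by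
  have h := Real.one_sub_inv_le_log_of_pos (show 0 < x/c by positivity)
  have h2 : Real.log (x/c) = Real.log x - Real.log c := Real.log_div hx.ne' hc.ne'
  rw [h2] at h
  have h3 : (x/c)⁻¹ = c/x := by field_simp
  rw [h3] at h; linarith

/- ## Chebyshev-type criterion from the central binomial coefficient -/

lemma cheb {n j : ℕ} (hn : 0 < n) (h : (2*n)^(j+1) < 4^n) : Nat.nth Nat.Prime j ≤ 2*n := by
  have h2n : 0 < 2*n := by omega
  have hcb0 : Nat.centralBinom n ≠ 0 := Nat.centralBinom_ne_zero n
  have key : Nat.centralBinom n ≤ (2*n)^(Nat.count Nat.Prime (2*n+1)) := by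
    conv_lhs => rw [← Nat.factorization_prod_pow_eq_self hcb0]
    rw [Finsupp.prod]
    calc ∏ q ∈ (Nat.factorization (Nat.centralBinom n)).support,
          q ^ (Nat.factorization (Nat.centralBinom n)) q
        ≤ ∏ _q ∈ (Nat.factorization (Nat.centralBinom n)).support, (2*n) := by
          apply Finset.prod_le_prod (fun _ _ => Nat.zero_le _)
          intro q _
          rw [Nat.centralBinom_eq_two_mul_choose]
          exact Nat.pow_factorization_choose_le h2n
      _ = (2*n)^((Nat.factorization (Nat.centralBinom n)).support.card) :=
          Finset.prod_const _
      _ ≤ (2*n)^(Nat.count Nat.Prime (2*n+1)) := by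
          apply Nat.pow_le_pow_right h2n
          rw [Nat.count_eq_card_filter_range]
          apply Finset.card_le_card
          intro q hq
          have hpos : 0 < (Nat.factorization (Nat.centralBinom n)) q :=
            Nat.pos_of_ne_zero (Finsupp.mem_support_iff.mp hq)
          have hqle : q ≤ 2*n := Nat.le_two_mul_of_factorization_centralBinom_pos hpos
          have hqprime : Nat.Prime q := by
            rw [Nat.support_factorization] at hq
            exact Nat.prime_of_mem_primeFactors hq
          simp only [Finset.mem_filter, Finset.mem_range]
          exact ⟨by omega, hqprime⟩
  have h4 : 4^n ≤ 2*n*Nat.centralBinom n := Nat.four_pow_le_two_mul_self_mul_centralBinom n hn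
  have hcount : j < Nat.count Nat.Prime (2*n+1) := by
    by_contra hc
    push_neg at hc
    have : (4:ℕ)^n ≤ (2*n)^(j+1) := by
      calc (4:ℕ)^n ≤ 2*n*Nat.centralBinom n := h4
        _ ≤ 2*n*(2*n)^(Nat.count Nat.Prime (2*n+1)) := Nat.mul_le_mul_left _ key
        _ = (2*n)^(Nat.count Nat.Prime (2*n+1) + 1) := by ring
        _ ≤ (2*n)^(j+1) := Nat.pow_le_pow_right h2n (by omega)
    omega
  have := Nat.nth_lt_of_lt_count hcount
  omega

/- ## Prime counting facts -/

lemma cs_true {m c : ℕ} (h : Nat.count Nat.Prime m = c) (hp : Nat.Prime m) :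
    Nat.count Nat.Prime (m+1) = c+1 := by rw [Nat.count_succ, h, if_pos hp]
lemma cs_false {m c : ℕ} (h : Nat.count Nat.Prime m = c) (hp : ¬ Nat.Prime m) :
    Nat.count Nat.Prime (m+1) = c := by rw [Nat.count_succ, h, if_neg hp, add_zero]

lemma cN2 : Nat.count Nat.Prime 2 = 0 :=
  cs_false (cs_false (Nat.count_zero Nat.Prime) (by norm_num)) (by norm_num)
lemma cN3 : Nat.count Nat.Prime 3 = 1 := cs_true cN2 (by norm_num)
lemma cN4 : Nat.count Nat.Prime 4 = 2 := cs_true cN3 (by norm_num)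
lemma cN5 : Nat.count Nat.Prime 5 = 2 := cs_false cN4 (by norm_num)
lemma cN6 : Nat.count Nat.Prime 6 = 3 := cs_true cN5 (by norm_num)
lemma cN7 : Nat.count Nat.Prime 7 = 3 := cs_false cN6 (by norm_num)
lemma cN8 : Nat.count Nat.Prime 8 = 4 := cs_true cN7 (by norm_num)
lemma cN9 : Nat.count Nat.Prime 9 = 4 := cs_false cN8 (by norm_num)
lemma cN10 : Nat.count Nat.Prime 10 = 4 := cs_false cN9 (by norm_num)
lemma cN11 : Nat.count Nat.Prime 11 = 4 := cs_false cN10 (by norm_num)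
lemma cN12 : Nat.count Nat.Prime 12 = 5 := cs_true cN11 (by norm_num)
lemma cN13 : Nat.count Nat.Prime 13 = 5 := cs_false cN12 (by norm_num)
lemma cN14 : Nat.count Nat.Prime 14 = 6 := cs_true cN13 (by norm_num)
lemma cN15 : Nat.count Nat.Prime 15 = 6 := cs_false cN14 (by norm_num)
lemma cN16 : Nat.count Nat.Prime 16 = 6 := cs_false cN15 (by norm_num)
lemma cN17 : Nat.count Nat.Prime 17 = 6 := cs_false cN16 (by norm_num)
lemma cN18 : Nat.count Nat.Prime 18 = 7 := cs_true cN17 (by norm_num)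
lemma cN19 : Nat.count Nat.Prime 19 = 7 := cs_false cN18 (by norm_num)
lemma cN20 : Nat.count Nat.Prime 20 = 8 := cs_true cN19 (by norm_num)
lemma cN21 : Nat.count Nat.Prime 21 = 8 := cs_false cN20 (by norm_num)
lemma cN22 : Nat.count Nat.Prime 22 = 8 := cs_false cN21 (by norm_num)
lemma cN23 : Nat.count Nat.Prime 23 = 8 := cs_false cN22 (by norm_num)
lemma cN24 : Nat.count Nat.Prime 24 = 9 := cs_true cN23 (by norm_num)
lemma cN25 : Nat.count Nat.Prime 25 = 9 := cs_false cN24 (by norm_num)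
lemma cN26 : Nat.count Nat.Prime 26 = 9 := cs_false cN25 (by norm_num)
lemma cN27 : Nat.count Nat.Prime 27 = 9 := cs_false cN26 (by norm_num)
lemma cN28 : Nat.count Nat.Prime 28 = 9 := cs_false cN27 (by norm_num)
lemma cN29 : Nat.count Nat.Prime 29 = 9 := cs_false cN28 (by norm_num)
lemma cN30 : Nat.count Nat.Prime 30 = 10 := cs_true cN29 (by norm_num)
lemma cN31 : Nat.count Nat.Prime 31 = 10 := cs_false cN30 (by norm_num)
lemma cN32 : Nat.count Nat.Prime 32 = 11 := cs_true cN31 (by norm_num)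
lemma cN33 : Nat.count Nat.Prime 33 = 11 := cs_false cN32 (by norm_num)
lemma cN34 : Nat.count Nat.Prime 34 = 11 := cs_false cN33 (by norm_num)
lemma cN35 : Nat.count Nat.Prime 35 = 11 := cs_false cN34 (by norm_num)
lemma cN36 : Nat.count Nat.Prime 36 = 11 := cs_false cN35 (by norm_num)
lemma cN37 : Nat.count Nat.Prime 37 = 11 := cs_false cN36 (by norm_num)
lemma cN38 : Nat.count Nat.Prime 38 = 12 := cs_true cN37 (by norm_num)
lemma cN39 : Nat.count Nat.Prime 39 = 12 := cs_false cN38 (by norm_num)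
lemma cN40 : Nat.count Nat.Prime 40 = 12 := cs_false cN39 (by norm_num)
lemma cN41 : Nat.count Nat.Prime 41 = 12 := cs_false cN40 (by norm_num)
lemma cN42 : Nat.count Nat.Prime 42 = 13 := cs_true cN41 (by norm_num)
lemma cN43 : Nat.count Nat.Prime 43 = 13 := cs_false cN42 (by norm_num)
lemma cN44 : Nat.count Nat.Prime 44 = 14 := cs_true cN43 (by norm_num)
lemma cN45 : Nat.count Nat.Prime 45 = 14 := cs_false cN44 (by norm_num)
lemma cN46 : Nat.count Nat.Prime 46 = 14 := cs_false cN45 (by norm_num)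
lemma cN47 : Nat.count Nat.Prime 47 = 14 := cs_false cN46 (by norm_num)
lemma cN48 : Nat.count Nat.Prime 48 = 15 := cs_true cN47 (by norm_num)
lemma cN49 : Nat.count Nat.Prime 49 = 15 := cs_false cN48 (by norm_num)
lemma cN50 : Nat.count Nat.Prime 50 = 15 := cs_false cN49 (by norm_num)
lemma cN51 : Nat.count Nat.Prime 51 = 15 := cs_false cN50 (by norm_num)
lemma cN52 : Nat.count Nat.Prime 52 = 15 := cs_false cN51 (by norm_num)
lemma cN53 : Nat.count Nat.Prime 53 = 15 := cs_false cN52 (by norm_num)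
lemma cN54 : Nat.count Nat.Prime 54 = 16 := cs_true cN53 (by norm_num)
lemma cN55 : Nat.count Nat.Prime 55 = 16 := cs_false cN54 (by norm_num)
lemma cN56 : Nat.count Nat.Prime 56 = 16 := cs_false cN55 (by norm_num)
lemma cN57 : Nat.count Nat.Prime 57 = 16 := cs_false cN56 (by norm_num)
lemma cN58 : Nat.count Nat.Prime 58 = 16 := cs_false cN57 (by norm_num)
lemma cN59 : Nat.count Nat.Prime 59 = 16 := cs_false cN58 (by norm_num)
lemma cN60 : Nat.count Nat.Prime 60 = 17 := cs_true cN59 (by norm_num)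
lemma cN61 : Nat.count Nat.Prime 61 = 17 := cs_false cN60 (by norm_num)
lemma cN62 : Nat.count Nat.Prime 62 = 18 := cs_true cN61 (by norm_num)
lemma cN63 : Nat.count Nat.Prime 63 = 18 := cs_false cN62 (by norm_num)
lemma cN64 : Nat.count Nat.Prime 64 = 18 := cs_false cN63 (by norm_num)
lemma cN65 : Nat.count Nat.Prime 65 = 18 := cs_false cN64 (by norm_num)
lemma cN66 : Nat.count Nat.Prime 66 = 18 := cs_false cN65 (by norm_num)
lemma cN67 : Nat.count Nat.Prime 67 = 18 := cs_false cN66 (by norm_num)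
lemma cN68 : Nat.count Nat.Prime 68 = 19 := cs_true cN67 (by norm_num)
lemma cN69 : Nat.count Nat.Prime 69 = 19 := cs_false cN68 (by norm_num)
lemma cN70 : Nat.count Nat.Prime 70 = 19 := cs_false cN69 (by norm_num)
lemma cN71 : Nat.count Nat.Prime 71 = 19 := cs_false cN70 (by norm_num)
lemma cN72 : Nat.count Nat.Prime 72 = 20 := cs_true cN71 (by norm_num)
lemma cN73 : Nat.count Nat.Prime 73 = 20 := cs_false cN72 (by norm_num)
lemma cN74 : Nat.count Nat.Prime 74 = 21 := cs_true cN73 (by norm_num)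
lemma cN75 : Nat.count Nat.Prime 75 = 21 := cs_false cN74 (by norm_num)
lemma cN76 : Nat.count Nat.Prime 76 = 21 := cs_false cN75 (by norm_num)
lemma cN77 : Nat.count Nat.Prime 77 = 21 := cs_false cN76 (by norm_num)
lemma cN78 : Nat.count Nat.Prime 78 = 21 := cs_false cN77 (by norm_num)
lemma cN79 : Nat.count Nat.Prime 79 = 21 := cs_false cN78 (by norm_num)
lemma cN80 : Nat.count Nat.Prime 80 = 22 := cs_true cN79 (by norm_num)
lemma cN81 : Nat.count Nat.Prime 81 = 22 := cs_false cN80 (by norm_num)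
lemma cN82 : Nat.count Nat.Prime 82 = 22 := cs_false cN81 (by norm_num)
lemma cN83 : Nat.count Nat.Prime 83 = 22 := cs_false cN82 (by norm_num)
lemma cN84 : Nat.count Nat.Prime 84 = 23 := cs_true cN83 (by norm_num)
lemma cN85 : Nat.count Nat.Prime 85 = 23 := cs_false cN84 (by norm_num)
lemma cN86 : Nat.count Nat.Prime 86 = 23 := cs_false cN85 (by norm_num)
lemma cN87 : Nat.count Nat.Prime 87 = 23 := cs_false cN86 (by norm_num)
lemma cN88 : Nat.count Nat.Prime 88 = 23 := cs_false cN87 (by norm_num)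
lemma cN89 : Nat.count Nat.Prime 89 = 23 := cs_false cN88 (by norm_num)
lemma cN90 : Nat.count Nat.Prime 90 = 24 := cs_true cN89 (by norm_num)
lemma cN91 : Nat.count Nat.Prime 91 = 24 := cs_false cN90 (by norm_num)
lemma cN92 : Nat.count Nat.Prime 92 = 24 := cs_false cN91 (by norm_num)
lemma cN93 : Nat.count Nat.Prime 93 = 24 := cs_false cN92 (by norm_num)
lemma cN94 : Nat.count Nat.Prime 94 = 24 := cs_false cN93 (by norm_num)
lemma cN95 : Nat.count Nat.Prime 95 = 24 := cs_false cN94 (by norm_num)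
lemma cN96 : Nat.count Nat.Prime 96 = 24 := cs_false cN95 (by norm_num)
lemma cN97 : Nat.count Nat.Prime 97 = 24 := cs_false cN96 (by norm_num)
lemma cN98 : Nat.count Nat.Prime 98 = 25 := cs_true cN97 (by norm_num)
lemma cN99 : Nat.count Nat.Prime 99 = 25 := cs_false cN98 (by norm_num)
lemma cN100 : Nat.count Nat.Prime 100 = 25 := cs_false cN99 (by norm_num)
lemma cN101 : Nat.count Nat.Prime 101 = 25 := cs_false cN100 (by norm_num)
lemma cN102 : Nat.count Nat.Prime 102 = 26 := cs_true cN101 (by norm_num)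
lemma cN103 : Nat.count Nat.Prime 103 = 26 := cs_false cN102 (by norm_num)
lemma cN104 : Nat.count Nat.Prime 104 = 27 := cs_true cN103 (by norm_num)
lemma cN105 : Nat.count Nat.Prime 105 = 27 := cs_false cN104 (by norm_num)
lemma cN106 : Nat.count Nat.Prime 106 = 27 := cs_false cN105 (by norm_num)
lemma cN107 : Nat.count Nat.Prime 107 = 27 := cs_false cN106 (by norm_num)
lemma cN108 : Nat.count Nat.Prime 108 = 28 := cs_true cN107 (by norm_num)
lemma cN109 : Nat.count Nat.Prime 109 = 28 := cs_false cN108 (by norm_num)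
lemma cN110 : Nat.count Nat.Prime 110 = 29 := cs_true cN109 (by norm_num)
lemma cN111 : Nat.count Nat.Prime 111 = 29 := cs_false cN110 (by norm_num)
lemma cN112 : Nat.count Nat.Prime 112 = 29 := cs_false cN111 (by norm_num)
lemma cN113 : Nat.count Nat.Prime 113 = 29 := cs_false cN112 (by norm_num)
lemma cN114 : Nat.count Nat.Prime 114 = 30 := cs_true cN113 (by norm_num)
lemma cN115 : Nat.count Nat.Prime 115 = 30 := cs_false cN114 (by norm_num)
lemma cN116 : Nat.count Nat.Prime 116 = 30 := cs_false cN115 (by norm_num)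
lemma cN117 : Nat.count Nat.Prime 117 = 30 := cs_false cN116 (by norm_num)
lemma cN118 : Nat.count Nat.Prime 118 = 30 := cs_false cN117 (by norm_num)
lemma cN119 : Nat.count Nat.Prime 119 = 30 := cs_false cN118 (by norm_num)
lemma cN120 : Nat.count Nat.Prime 120 = 30 := cs_false cN119 (by norm_num)
lemma cN121 : Nat.count Nat.Prime 121 = 30 := cs_false cN120 (by norm_num)
lemma cN122 : Nat.count Nat.Prime 122 = 30 := cs_false cN121 (by norm_num)
lemma cN123 : Nat.count Nat.Prime 123 = 30 := cs_false cN122 (by norm_num)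
lemma cN124 : Nat.count Nat.Prime 124 = 30 := cs_false cN123 (by norm_num)
lemma cN125 : Nat.count Nat.Prime 125 = 30 := cs_false cN124 (by norm_num)
lemma cN126 : Nat.count Nat.Prime 126 = 30 := cs_false cN125 (by norm_num)
lemma cN127 : Nat.count Nat.Prime 127 = 30 := cs_false cN126 (by norm_num)
lemma cN128 : Nat.count Nat.Prime 128 = 31 := cs_true cN127 (by norm_num)
lemma cN129 : Nat.count Nat.Prime 129 = 31 := cs_false cN128 (by norm_num)
lemma cN130 : Nat.count Nat.Prime 130 = 31 := cs_false cN129 (by norm_num)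
lemma cN131 : Nat.count Nat.Prime 131 = 31 := cs_false cN130 (by norm_num)
lemma cN132 : Nat.count Nat.Prime 132 = 32 := cs_true cN131 (by norm_num)
lemma cN133 : Nat.count Nat.Prime 133 = 32 := cs_false cN132 (by norm_num)
lemma cN134 : Nat.count Nat.Prime 134 = 32 := cs_false cN133 (by norm_num)
lemma cN135 : Nat.count Nat.Prime 135 = 32 := cs_false cN134 (by norm_num)
lemma cN136 : Nat.count Nat.Prime 136 = 32 := cs_false cN135 (by norm_num)
lemma cN137 : Nat.count Nat.Prime 137 = 32 := cs_false cN136 (by norm_num)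
lemma cN138 : Nat.count Nat.Prime 138 = 33 := cs_true cN137 (by norm_num)
lemma cN139 : Nat.count Nat.Prime 139 = 33 := cs_false cN138 (by norm_num)
lemma cN140 : Nat.count Nat.Prime 140 = 34 := cs_true cN139 (by norm_num)
lemma cN141 : Nat.count Nat.Prime 141 = 34 := cs_false cN140 (by norm_num)
lemma cN142 : Nat.count Nat.Prime 142 = 34 := cs_false cN141 (by norm_num)
lemma cN143 : Nat.count Nat.Prime 143 = 34 := cs_false cN142 (by norm_num)
lemma cN144 : Nat.count Nat.Prime 144 = 34 := cs_false cN143 (by norm_num)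
lemma cN145 : Nat.count Nat.Prime 145 = 34 := cs_false cN144 (by norm_num)
lemma cN146 : Nat.count Nat.Prime 146 = 34 := cs_false cN145 (by norm_num)
lemma cN147 : Nat.count Nat.Prime 147 = 34 := cs_false cN146 (by norm_num)
lemma cN148 : Nat.count Nat.Prime 148 = 34 := cs_false cN147 (by norm_num)
lemma cN149 : Nat.count Nat.Prime 149 = 34 := cs_false cN148 (by norm_num)
lemma cN150 : Nat.count Nat.Prime 150 = 35 := cs_true cN149 (by norm_num)
lemma cN151 : Nat.count Nat.Prime 151 = 35 := cs_false cN150 (by norm_num)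
lemma cN152 : Nat.count Nat.Prime 152 = 36 := cs_true cN151 (by norm_num)
lemma cN153 : Nat.count Nat.Prime 153 = 36 := cs_false cN152 (by norm_num)
lemma cN154 : Nat.count Nat.Prime 154 = 36 := cs_false cN153 (by norm_num)
lemma cN155 : Nat.count Nat.Prime 155 = 36 := cs_false cN154 (by norm_num)
lemma cN156 : Nat.count Nat.Prime 156 = 36 := cs_false cN155 (by norm_num)
lemma cN157 : Nat.count Nat.Prime 157 = 36 := cs_false cN156 (by norm_num)
lemma cN158 : Nat.count Nat.Prime 158 = 37 := cs_true cN157 (by norm_num)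
lemma cN159 : Nat.count Nat.Prime 159 = 37 := cs_false cN158 (by norm_num)
lemma cN160 : Nat.count Nat.Prime 160 = 37 := cs_false cN159 (by norm_num)
lemma cN161 : Nat.count Nat.Prime 161 = 37 := cs_false cN160 (by norm_num)
lemma cN162 : Nat.count Nat.Prime 162 = 37 := cs_false cN161 (by norm_num)
lemma cN163 : Nat.count Nat.Prime 163 = 37 := cs_false cN162 (by norm_num)
lemma cN164 : Nat.count Nat.Prime 164 = 38 := cs_true cN163 (by norm_num)
lemma cN165 : Nat.count Nat.Prime 165 = 38 := cs_false cN164 (by norm_num)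
lemma cN166 : Nat.count Nat.Prime 166 = 38 := cs_false cN165 (by norm_num)
lemma cN167 : Nat.count Nat.Prime 167 = 38 := cs_false cN166 (by norm_num)
lemma cN168 : Nat.count Nat.Prime 168 = 39 := cs_true cN167 (by norm_num)
lemma cN169 : Nat.count Nat.Prime 169 = 39 := cs_false cN168 (by norm_num)
lemma cN170 : Nat.count Nat.Prime 170 = 39 := cs_false cN169 (by norm_num)
lemma cN171 : Nat.count Nat.Prime 171 = 39 := cs_false cN170 (by norm_num)
lemma cN172 : Nat.count Nat.Prime 172 = 39 := cs_false cN171 (by norm_num)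
lemma cN173 : Nat.count Nat.Prime 173 = 39 := cs_false cN172 (by norm_num)
lemma cN174 : Nat.count Nat.Prime 174 = 40 := cs_true cN173 (by norm_num)
lemma cN175 : Nat.count Nat.Prime 175 = 40 := cs_false cN174 (by norm_num)
lemma cN176 : Nat.count Nat.Prime 176 = 40 := cs_false cN175 (by norm_num)
lemma cN177 : Nat.count Nat.Prime 177 = 40 := cs_false cN176 (by norm_num)
lemma cN178 : Nat.count Nat.Prime 178 = 40 := cs_false cN177 (by norm_num)
lemma cN179 : Nat.count Nat.Prime 179 = 40 := cs_false cN178 (by norm_num)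
lemma cN180 : Nat.count Nat.Prime 180 = 41 := cs_true cN179 (by norm_num)
lemma cN181 : Nat.count Nat.Prime 181 = 41 := cs_false cN180 (by norm_num)
lemma cN182 : Nat.count Nat.Prime 182 = 42 := cs_true cN181 (by norm_num)
lemma cN183 : Nat.count Nat.Prime 183 = 42 := cs_false cN182 (by norm_num)
lemma cN184 : Nat.count Nat.Prime 184 = 42 := cs_false cN183 (by norm_num)
lemma cN185 : Nat.count Nat.Prime 185 = 42 := cs_false cN184 (by norm_num)
lemma cN186 : Nat.count Nat.Prime 186 = 42 := cs_false cN185 (by norm_num)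
lemma cN187 : Nat.count Nat.Prime 187 = 42 := cs_false cN186 (by norm_num)
lemma cN188 : Nat.count Nat.Prime 188 = 42 := cs_false cN187 (by norm_num)
lemma cN189 : Nat.count Nat.Prime 189 = 42 := cs_false cN188 (by norm_num)
lemma cN190 : Nat.count Nat.Prime 190 = 42 := cs_false cN189 (by norm_num)
lemma cN191 : Nat.count Nat.Prime 191 = 42 := cs_false cN190 (by norm_num)
lemma cN192 : Nat.count Nat.Prime 192 = 43 := cs_true cN191 (by norm_num)
lemma cN193 : Nat.count Nat.Prime 193 = 43 := cs_false cN192 (by norm_num)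
lemma cN194 : Nat.count Nat.Prime 194 = 44 := cs_true cN193 (by norm_num)
lemma cN195 : Nat.count Nat.Prime 195 = 44 := cs_false cN194 (by norm_num)
lemma cN196 : Nat.count Nat.Prime 196 = 44 := cs_false cN195 (by norm_num)
lemma cN197 : Nat.count Nat.Prime 197 = 44 := cs_false cN196 (by norm_num)
lemma cN198 : Nat.count Nat.Prime 198 = 45 := cs_true cN197 (by norm_num)
lemma cN199 : Nat.count Nat.Prime 199 = 45 := cs_false cN198 (by norm_num)
lemma cN200 : Nat.count Nat.Prime 200 = 46 := cs_true cN199 (by norm_num)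
lemma cN201 : Nat.count Nat.Prime 201 = 46 := cs_false cN200 (by norm_num)
lemma cN202 : Nat.count Nat.Prime 202 = 46 := cs_false cN201 (by norm_num)
lemma cN203 : Nat.count Nat.Prime 203 = 46 := cs_false cN202 (by norm_num)
lemma cN204 : Nat.count Nat.Prime 204 = 46 := cs_false cN203 (by norm_num)
lemma cN205 : Nat.count Nat.Prime 205 = 46 := cs_false cN204 (by norm_num)
lemma cN206 : Nat.count Nat.Prime 206 = 46 := cs_false cN205 (by norm_num)
lemma cN207 : Nat.count Nat.Prime 207 = 46 := cs_false cN206 (by norm_num)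
lemma cN208 : Nat.count Nat.Prime 208 = 46 := cs_false cN207 (by norm_num)
lemma cN209 : Nat.count Nat.Prime 209 = 46 := cs_false cN208 (by norm_num)
lemma cN210 : Nat.count Nat.Prime 210 = 46 := cs_false cN209 (by norm_num)
lemma cN211 : Nat.count Nat.Prime 211 = 46 := cs_false cN210 (by norm_num)
lemma cN212 : Nat.count Nat.Prime 212 = 47 := cs_true cN211 (by norm_num)
lemma cN213 : Nat.count Nat.Prime 213 = 47 := cs_false cN212 (by norm_num)
lemma cN214 : Nat.count Nat.Prime 214 = 47 := cs_false cN213 (by norm_num)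
lemma cN215 : Nat.count Nat.Prime 215 = 47 := cs_false cN214 (by norm_num)
lemma cN216 : Nat.count Nat.Prime 216 = 47 := cs_false cN215 (by norm_num)
lemma cN217 : Nat.count Nat.Prime 217 = 47 := cs_false cN216 (by norm_num)
lemma cN218 : Nat.count Nat.Prime 218 = 47 := cs_false cN217 (by norm_num)
lemma cN219 : Nat.count Nat.Prime 219 = 47 := cs_false cN218 (by norm_num)
lemma cN220 : Nat.count Nat.Prime 220 = 47 := cs_false cN219 (by norm_num)
lemma cN221 : Nat.count Nat.Prime 221 = 47 := cs_false cN220 (by norm_num)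
lemma cN222 : Nat.count Nat.Prime 222 = 47 := cs_false cN221 (by norm_num)
lemma cN223 : Nat.count Nat.Prime 223 = 47 := cs_false cN222 (by norm_num)
lemma cN224 : Nat.count Nat.Prime 224 = 48 := cs_true cN223 (by norm_num)
lemma cN225 : Nat.count Nat.Prime 225 = 48 := cs_false cN224 (by norm_num)
lemma cN226 : Nat.count Nat.Prime 226 = 48 := cs_false cN225 (by norm_num)
lemma cN227 : Nat.count Nat.Prime 227 = 48 := cs_false cN226 (by norm_num)
lemma cN228 : Nat.count Nat.Prime 228 = 49 := cs_true cN227 (by norm_num)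
lemma cN229 : Nat.count Nat.Prime 229 = 49 := cs_false cN228 (by norm_num)
lemma cN230 : Nat.count Nat.Prime 230 = 50 := cs_true cN229 (by norm_num)
lemma cN231 : Nat.count Nat.Prime 231 = 50 := cs_false cN230 (by norm_num)
lemma cN232 : Nat.count Nat.Prime 232 = 50 := cs_false cN231 (by norm_num)
lemma cN233 : Nat.count Nat.Prime 233 = 50 := cs_false cN232 (by norm_num)
lemma cN234 : Nat.count Nat.Prime 234 = 51 := cs_true cN233 (by norm_num)
lemma cN235 : Nat.count Nat.Prime 235 = 51 := cs_false cN234 (by norm_num)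
lemma cN236 : Nat.count Nat.Prime 236 = 51 := cs_false cN235 (by norm_num)
lemma cN237 : Nat.count Nat.Prime 237 = 51 := cs_false cN236 (by norm_num)
lemma cN238 : Nat.count Nat.Prime 238 = 51 := cs_false cN237 (by norm_num)
lemma cN239 : Nat.count Nat.Prime 239 = 51 := cs_false cN238 (by norm_num)
lemma cN240 : Nat.count Nat.Prime 240 = 52 := cs_true cN239 (by norm_num)
lemma cN241 : Nat.count Nat.Prime 241 = 52 := cs_false cN240 (by norm_num)
lemma cN242 : Nat.count Nat.Prime 242 = 53 := cs_true cN241 (by norm_num)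
lemma cN243 : Nat.count Nat.Prime 243 = 53 := cs_false cN242 (by norm_num)
lemma cN244 : Nat.count Nat.Prime 244 = 53 := cs_false cN243 (by norm_num)
lemma cN245 : Nat.count Nat.Prime 245 = 53 := cs_false cN244 (by norm_num)
lemma cN246 : Nat.count Nat.Prime 246 = 53 := cs_false cN245 (by norm_num)
lemma cN247 : Nat.count Nat.Prime 247 = 53 := cs_false cN246 (by norm_num)
lemma cN248 : Nat.count Nat.Prime 248 = 53 := cs_false cN247 (by norm_num)
lemma cN249 : Nat.count Nat.Prime 249 = 53 := cs_false cN248 (by norm_num)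
lemma cN250 : Nat.count Nat.Prime 250 = 53 := cs_false cN249 (by norm_num)
lemma cN251 : Nat.count Nat.Prime 251 = 53 := cs_false cN250 (by norm_num)
lemma cN252 : Nat.count Nat.Prime 252 = 54 := cs_true cN251 (by norm_num)
lemma cN253 : Nat.count Nat.Prime 253 = 54 := cs_false cN252 (by norm_num)
lemma cN254 : Nat.count Nat.Prime 254 = 54 := cs_false cN253 (by norm_num)
lemma cN255 : Nat.count Nat.Prime 255 = 54 := cs_false cN254 (by norm_num)
lemma cN256 : Nat.count Nat.Prime 256 = 54 := cs_false cN255 (by norm_num)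
lemma cN257 : Nat.count Nat.Prime 257 = 54 := cs_false cN256 (by norm_num)
lemma cN258 : Nat.count Nat.Prime 258 = 55 := cs_true cN257 (by norm_num)
lemma cN259 : Nat.count Nat.Prime 259 = 55 := cs_false cN258 (by norm_num)
lemma cN260 : Nat.count Nat.Prime 260 = 55 := cs_false cN259 (by norm_num)
lemma cN261 : Nat.count Nat.Prime 261 = 55 := cs_false cN260 (by norm_num)
lemma cN262 : Nat.count Nat.Prime 262 = 55 := cs_false cN261 (by norm_num)
lemma cN263 : Nat.count Nat.Prime 263 = 55 := cs_false cN262 (by norm_num)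
lemma cN264 : Nat.count Nat.Prime 264 = 56 := cs_true cN263 (by norm_num)
lemma cN265 : Nat.count Nat.Prime 265 = 56 := cs_false cN264 (by norm_num)
lemma cN266 : Nat.count Nat.Prime 266 = 56 := cs_false cN265 (by norm_num)
lemma cN267 : Nat.count Nat.Prime 267 = 56 := cs_false cN266 (by norm_num)
lemma cN268 : Nat.count Nat.Prime 268 = 56 := cs_false cN267 (by norm_num)
lemma cN269 : Nat.count Nat.Prime 269 = 56 := cs_false cN268 (by norm_num)
lemma cN270 : Nat.count Nat.Prime 270 = 57 := cs_true cN269 (by norm_num)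
lemma cN271 : Nat.count Nat.Prime 271 = 57 := cs_false cN270 (by norm_num)
lemma cN272 : Nat.count Nat.Prime 272 = 58 := cs_true cN271 (by norm_num)
lemma cN273 : Nat.count Nat.Prime 273 = 58 := cs_false cN272 (by norm_num)
lemma cN274 : Nat.count Nat.Prime 274 = 58 := cs_false cN273 (by norm_num)
lemma cN275 : Nat.count Nat.Prime 275 = 58 := cs_false cN274 (by norm_num)
lemma cN276 : Nat.count Nat.Prime 276 = 58 := cs_false cN275 (by norm_num)
lemma cN277 : Nat.count Nat.Prime 277 = 58 := cs_false cN276 (by norm_num)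
lemma cN278 : Nat.count Nat.Prime 278 = 59 := cs_true cN277 (by norm_num)
lemma cN279 : Nat.count Nat.Prime 279 = 59 := cs_false cN278 (by norm_num)
lemma cN280 : Nat.count Nat.Prime 280 = 59 := cs_false cN279 (by norm_num)
lemma cN281 : Nat.count Nat.Prime 281 = 59 := cs_false cN280 (by norm_num)
lemma cN282 : Nat.count Nat.Prime 282 = 60 := cs_true cN281 (by norm_num)
lemma cN283 : Nat.count Nat.Prime 283 = 60 := cs_false cN282 (by norm_num)
lemma cN284 : Nat.count Nat.Prime 284 = 61 := cs_true cN283 (by norm_num)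
lemma cN285 : Nat.count Nat.Prime 285 = 61 := cs_false cN284 (by norm_num)
lemma cN286 : Nat.count Nat.Prime 286 = 61 := cs_false cN285 (by norm_num)
lemma cN287 : Nat.count Nat.Prime 287 = 61 := cs_false cN286 (by norm_num)
lemma cN288 : Nat.count Nat.Prime 288 = 61 := cs_false cN287 (by norm_num)
lemma cN289 : Nat.count Nat.Prime 289 = 61 := cs_false cN288 (by norm_num)
lemma cN290 : Nat.count Nat.Prime 290 = 61 := cs_false cN289 (by norm_num)
lemma cN291 : Nat.count Nat.Prime 291 = 61 := cs_false cN290 (by norm_num)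
lemma cN292 : Nat.count Nat.Prime 292 = 61 := cs_false cN291 (by norm_num)
lemma cN293 : Nat.count Nat.Prime 293 = 61 := cs_false cN292 (by norm_num)
lemma cN294 : Nat.count Nat.Prime 294 = 62 := cs_true cN293 (by norm_num)
lemma cN295 : Nat.count Nat.Prime 295 = 62 := cs_false cN294 (by norm_num)
lemma cN296 : Nat.count Nat.Prime 296 = 62 := cs_false cN295 (by norm_num)
lemma cN297 : Nat.count Nat.Prime 297 = 62 := cs_false cN296 (by norm_num)
lemma cN298 : Nat.count Nat.Prime 298 = 62 := cs_false cN297 (by norm_num)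
lemma cN299 : Nat.count Nat.Prime 299 = 62 := cs_false cN298 (by norm_num)
lemma cN300 : Nat.count Nat.Prime 300 = 62 := cs_false cN299 (by norm_num)
lemma cN301 : Nat.count Nat.Prime 301 = 62 := cs_false cN300 (by norm_num)
lemma cN302 : Nat.count Nat.Prime 302 = 62 := cs_false cN301 (by norm_num)
lemma cN303 : Nat.count Nat.Prime 303 = 62 := cs_false cN302 (by norm_num)
lemma cN304 : Nat.count Nat.Prime 304 = 62 := cs_false cN303 (by norm_num)
lemma cN305 : Nat.count Nat.Prime 305 = 62 := cs_false cN304 (by norm_num)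
lemma cN306 : Nat.count Nat.Prime 306 = 62 := cs_false cN305 (by norm_num)
lemma cN307 : Nat.count Nat.Prime 307 = 62 := cs_false cN306 (by norm_num)
lemma cN308 : Nat.count Nat.Prime 308 = 63 := cs_true cN307 (by norm_num)
lemma cN309 : Nat.count Nat.Prime 309 = 63 := cs_false cN308 (by norm_num)
lemma cN310 : Nat.count Nat.Prime 310 = 63 := cs_false cN309 (by norm_num)
lemma cN311 : Nat.count Nat.Prime 311 = 63 := cs_false cN310 (by norm_num)
lemma cN312 : Nat.count Nat.Prime 312 = 64 := cs_true cN311 (by norm_num)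
lemma cN313 : Nat.count Nat.Prime 313 = 64 := cs_false cN312 (by norm_num)
lemma cN314 : Nat.count Nat.Prime 314 = 65 := cs_true cN313 (by norm_num)
lemma cN315 : Nat.count Nat.Prime 315 = 65 := cs_false cN314 (by norm_num)
lemma cN316 : Nat.count Nat.Prime 316 = 65 := cs_false cN315 (by norm_num)
lemma cN317 : Nat.count Nat.Prime 317 = 65 := cs_false cN316 (by norm_num)
lemma cN318 : Nat.count Nat.Prime 318 = 66 := cs_true cN317 (by norm_num)
lemma cN319 : Nat.count Nat.Prime 319 = 66 := cs_false cN318 (by norm_num)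
lemma cN320 : Nat.count Nat.Prime 320 = 66 := cs_false cN319 (by norm_num)
lemma cN321 : Nat.count Nat.Prime 321 = 66 := cs_false cN320 (by norm_num)
lemma cN322 : Nat.count Nat.Prime 322 = 66 := cs_false cN321 (by norm_num)
lemma cN323 : Nat.count Nat.Prime 323 = 66 := cs_false cN322 (by norm_num)
lemma cN324 : Nat.count Nat.Prime 324 = 66 := cs_false cN323 (by norm_num)
lemma cN325 : Nat.count Nat.Prime 325 = 66 := cs_false cN324 (by norm_num)
lemma cN326 : Nat.count Nat.Prime 326 = 66 := cs_false cN325 (by norm_num)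
lemma cN327 : Nat.count Nat.Prime 327 = 66 := cs_false cN326 (by norm_num)
lemma cN328 : Nat.count Nat.Prime 328 = 66 := cs_false cN327 (by norm_num)
lemma cN329 : Nat.count Nat.Prime 329 = 66 := cs_false cN328 (by norm_num)
lemma cN330 : Nat.count Nat.Prime 330 = 66 := cs_false cN329 (by norm_num)
lemma cN331 : Nat.count Nat.Prime 331 = 66 := cs_false cN330 (by norm_num)
lemma cN332 : Nat.count Nat.Prime 332 = 67 := cs_true cN331 (by norm_num)
lemma cN333 : Nat.count Nat.Prime 333 = 67 := cs_false cN332 (by norm_num)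
lemma cN334 : Nat.count Nat.Prime 334 = 67 := cs_false cN333 (by norm_num)
lemma cN335 : Nat.count Nat.Prime 335 = 67 := cs_false cN334 (by norm_num)
lemma cN336 : Nat.count Nat.Prime 336 = 67 := cs_false cN335 (by norm_num)
lemma cN337 : Nat.count Nat.Prime 337 = 67 := cs_false cN336 (by norm_num)
lemma cN338 : Nat.count Nat.Prime 338 = 68 := cs_true cN337 (by norm_num)
lemma cN339 : Nat.count Nat.Prime 339 = 68 := cs_false cN338 (by norm_num)
lemma cN340 : Nat.count Nat.Prime 340 = 68 := cs_false cN339 (by norm_num)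
lemma cN341 : Nat.count Nat.Prime 341 = 68 := cs_false cN340 (by norm_num)
lemma cN342 : Nat.count Nat.Prime 342 = 68 := cs_false cN341 (by norm_num)
lemma cN343 : Nat.count Nat.Prime 343 = 68 := cs_false cN342 (by norm_num)
lemma cN344 : Nat.count Nat.Prime 344 = 68 := cs_false cN343 (by norm_num)
lemma cN345 : Nat.count Nat.Prime 345 = 68 := cs_false cN344 (by norm_num)
lemma cN346 : Nat.count Nat.Prime 346 = 68 := cs_false cN345 (by norm_num)
lemma cN347 : Nat.count Nat.Prime 347 = 68 := cs_false cN346 (by norm_num)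
lemma cN348 : Nat.count Nat.Prime 348 = 69 := cs_true cN347 (by norm_num)
lemma cN349 : Nat.count Nat.Prime 349 = 69 := cs_false cN348 (by norm_num)
lemma cN350 : Nat.count Nat.Prime 350 = 70 := cs_true cN349 (by norm_num)
lemma cN351 : Nat.count Nat.Prime 351 = 70 := cs_false cN350 (by norm_num)
lemma cN352 : Nat.count Nat.Prime 352 = 70 := cs_false cN351 (by norm_num)
lemma cN353 : Nat.count Nat.Prime 353 = 70 := cs_false cN352 (by norm_num)
lemma cN354 : Nat.count Nat.Prime 354 = 71 := cs_true cN353 (by norm_num)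
lemma cN355 : Nat.count Nat.Prime 355 = 71 := cs_false cN354 (by norm_num)
lemma cN356 : Nat.count Nat.Prime 356 = 71 := cs_false cN355 (by norm_num)
lemma cN357 : Nat.count Nat.Prime 357 = 71 := cs_false cN356 (by norm_num)
lemma cN358 : Nat.count Nat.Prime 358 = 71 := cs_false cN357 (by norm_num)
lemma cN359 : Nat.count Nat.Prime 359 = 71 := cs_false cN358 (by norm_num)
lemma cN360 : Nat.count Nat.Prime 360 = 72 := cs_true cN359 (by norm_num)
lemma cN361 : Nat.count Nat.Prime 361 = 72 := cs_false cN360 (by norm_num)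
lemma cN362 : Nat.count Nat.Prime 362 = 72 := cs_false cN361 (by norm_num)
lemma cN363 : Nat.count Nat.Prime 363 = 72 := cs_false cN362 (by norm_num)
lemma cN364 : Nat.count Nat.Prime 364 = 72 := cs_false cN363 (by norm_num)
lemma cN365 : Nat.count Nat.Prime 365 = 72 := cs_false cN364 (by norm_num)
lemma cN366 : Nat.count Nat.Prime 366 = 72 := cs_false cN365 (by norm_num)
lemma cN367 : Nat.count Nat.Prime 367 = 72 := cs_false cN366 (by norm_num)
lemma cN368 : Nat.count Nat.Prime 368 = 73 := cs_true cN367 (by norm_num)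
lemma cN369 : Nat.count Nat.Prime 369 = 73 := cs_false cN368 (by norm_num)
lemma cN370 : Nat.count Nat.Prime 370 = 73 := cs_false cN369 (by norm_num)
lemma cN371 : Nat.count Nat.Prime 371 = 73 := cs_false cN370 (by norm_num)
lemma cN372 : Nat.count Nat.Prime 372 = 73 := cs_false cN371 (by norm_num)
lemma cN373 : Nat.count Nat.Prime 373 = 73 := cs_false cN372 (by norm_num)
lemma cN374 : Nat.count Nat.Prime 374 = 74 := cs_true cN373 (by norm_num)
lemma cN375 : Nat.count Nat.Prime 375 = 74 := cs_false cN374 (by norm_num)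
lemma cN376 : Nat.count Nat.Prime 376 = 74 := cs_false cN375 (by norm_num)
lemma cN377 : Nat.count Nat.Prime 377 = 74 := cs_false cN376 (by norm_num)
lemma cN378 : Nat.count Nat.Prime 378 = 74 := cs_false cN377 (by norm_num)
lemma cN379 : Nat.count Nat.Prime 379 = 74 := cs_false cN378 (by norm_num)
lemma cN380 : Nat.count Nat.Prime 380 = 75 := cs_true cN379 (by norm_num)
lemma cN381 : Nat.count Nat.Prime 381 = 75 := cs_false cN380 (by norm_num)
lemma cN382 : Nat.count Nat.Prime 382 = 75 := cs_false cN381 (by norm_num)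
lemma cN383 : Nat.count Nat.Prime 383 = 75 := cs_false cN382 (by norm_num)
lemma cN384 : Nat.count Nat.Prime 384 = 76 := cs_true cN383 (by norm_num)
lemma cN385 : Nat.count Nat.Prime 385 = 76 := cs_false cN384 (by norm_num)
lemma cN386 : Nat.count Nat.Prime 386 = 76 := cs_false cN385 (by norm_num)
lemma cN387 : Nat.count Nat.Prime 387 = 76 := cs_false cN386 (by norm_num)
lemma cN388 : Nat.count Nat.Prime 388 = 76 := cs_false cN387 (by norm_num)
lemma cN389 : Nat.count Nat.Prime 389 = 76 := cs_false cN388 (by norm_num)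
lemma cN390 : Nat.count Nat.Prime 390 = 77 := cs_true cN389 (by norm_num)
lemma cN391 : Nat.count Nat.Prime 391 = 77 := cs_false cN390 (by norm_num)
lemma cN392 : Nat.count Nat.Prime 392 = 77 := cs_false cN391 (by norm_num)
lemma cN393 : Nat.count Nat.Prime 393 = 77 := cs_false cN392 (by norm_num)
lemma cN394 : Nat.count Nat.Prime 394 = 77 := cs_false cN393 (by norm_num)
lemma cN395 : Nat.count Nat.Prime 395 = 77 := cs_false cN394 (by norm_num)
lemma cN396 : Nat.count Nat.Prime 396 = 77 := cs_false cN395 (by norm_num)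
lemma cN397 : Nat.count Nat.Prime 397 = 77 := cs_false cN396 (by norm_num)
lemma cN398 : Nat.count Nat.Prime 398 = 78 := cs_true cN397 (by norm_num)
lemma cN399 : Nat.count Nat.Prime 399 = 78 := cs_false cN398 (by norm_num)
lemma cN400 : Nat.count Nat.Prime 400 = 78 := cs_false cN399 (by norm_num)
lemma cN401 : Nat.count Nat.Prime 401 = 78 := cs_false cN400 (by norm_num)
lemma cN402 : Nat.count Nat.Prime 402 = 79 := cs_true cN401 (by norm_num)
lemma cN403 : Nat.count Nat.Prime 403 = 79 := cs_false cN402 (by norm_num)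
lemma cN404 : Nat.count Nat.Prime 404 = 79 := cs_false cN403 (by norm_num)
lemma cN405 : Nat.count Nat.Prime 405 = 79 := cs_false cN404 (by norm_num)
lemma cN406 : Nat.count Nat.Prime 406 = 79 := cs_false cN405 (by norm_num)
lemma cN407 : Nat.count Nat.Prime 407 = 79 := cs_false cN406 (by norm_num)
lemma cN408 : Nat.count Nat.Prime 408 = 79 := cs_false cN407 (by norm_num)
lemma cN409 : Nat.count Nat.Prime 409 = 79 := cs_false cN408 (by norm_num)
lemma cN410 : Nat.count Nat.Prime 410 = 80 := cs_true cN409 (by norm_num)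
lemma cN411 : Nat.count Nat.Prime 411 = 80 := cs_false cN410 (by norm_num)
lemma cN412 : Nat.count Nat.Prime 412 = 80 := cs_false cN411 (by norm_num)
lemma cN413 : Nat.count Nat.Prime 413 = 80 := cs_false cN412 (by norm_num)
lemma cN414 : Nat.count Nat.Prime 414 = 80 := cs_false cN413 (by norm_num)
lemma cN415 : Nat.count Nat.Prime 415 = 80 := cs_false cN414 (by norm_num)
lemma cN416 : Nat.count Nat.Prime 416 = 80 := cs_false cN415 (by norm_num)
lemma cN417 : Nat.count Nat.Prime 417 = 80 := cs_false cN416 (by norm_num)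
lemma cN418 : Nat.count Nat.Prime 418 = 80 := cs_false cN417 (by norm_num)
lemma cN419 : Nat.count Nat.Prime 419 = 80 := cs_false cN418 (by norm_num)
lemma cN420 : Nat.count Nat.Prime 420 = 81 := cs_true cN419 (by norm_num)
lemma cN421 : Nat.count Nat.Prime 421 = 81 := cs_false cN420 (by norm_num)
lemma cN422 : Nat.count Nat.Prime 422 = 82 := cs_true cN421 (by norm_num)
lemma cN423 : Nat.count Nat.Prime 423 = 82 := cs_false cN422 (by norm_num)
lemma cN424 : Nat.count Nat.Prime 424 = 82 := cs_false cN423 (by norm_num)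
lemma cN425 : Nat.count Nat.Prime 425 = 82 := cs_false cN424 (by norm_num)
lemma cN426 : Nat.count Nat.Prime 426 = 82 := cs_false cN425 (by norm_num)
lemma cN427 : Nat.count Nat.Prime 427 = 82 := cs_false cN426 (by norm_num)
lemma cN428 : Nat.count Nat.Prime 428 = 82 := cs_false cN427 (by norm_num)
lemma cN429 : Nat.count Nat.Prime 429 = 82 := cs_false cN428 (by norm_num)
lemma cN430 : Nat.count Nat.Prime 430 = 82 := cs_false cN429 (by norm_num)
lemma cN431 : Nat.count Nat.Prime 431 = 82 := cs_false cN430 (by norm_num)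
lemma cN432 : Nat.count Nat.Prime 432 = 83 := cs_true cN431 (by norm_num)
lemma cN433 : Nat.count Nat.Prime 433 = 83 := cs_false cN432 (by norm_num)
lemma cN434 : Nat.count Nat.Prime 434 = 84 := cs_true cN433 (by norm_num)
lemma cN435 : Nat.count Nat.Prime 435 = 84 := cs_false cN434 (by norm_num)
lemma cN436 : Nat.count Nat.Prime 436 = 84 := cs_false cN435 (by norm_num)
lemma cN437 : Nat.count Nat.Prime 437 = 84 := cs_false cN436 (by norm_num)
lemma cN438 : Nat.count Nat.Prime 438 = 84 := cs_false cN437 (by norm_num)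
lemma cN439 : Nat.count Nat.Prime 439 = 84 := cs_false cN438 (by norm_num)
lemma cN440 : Nat.count Nat.Prime 440 = 85 := cs_true cN439 (by norm_num)
lemma cN441 : Nat.count Nat.Prime 441 = 85 := cs_false cN440 (by norm_num)
lemma cN442 : Nat.count Nat.Prime 442 = 85 := cs_false cN441 (by norm_num)
lemma cN443 : Nat.count Nat.Prime 443 = 85 := cs_false cN442 (by norm_num)
lemma cN444 : Nat.count Nat.Prime 444 = 86 := cs_true cN443 (by norm_num)
lemma cN445 : Nat.count Nat.Prime 445 = 86 := cs_false cN444 (by norm_num)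
lemma cN446 : Nat.count Nat.Prime 446 = 86 := cs_false cN445 (by norm_num)
lemma cN447 : Nat.count Nat.Prime 447 = 86 := cs_false cN446 (by norm_num)
lemma cN448 : Nat.count Nat.Prime 448 = 86 := cs_false cN447 (by norm_num)
lemma cN449 : Nat.count Nat.Prime 449 = 86 := cs_false cN448 (by norm_num)
lemma cN450 : Nat.count Nat.Prime 450 = 87 := cs_true cN449 (by norm_num)
lemma cN451 : Nat.count Nat.Prime 451 = 87 := cs_false cN450 (by norm_num)
lemma cN452 : Nat.count Nat.Prime 452 = 87 := cs_false cN451 (by norm_num)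
lemma cN453 : Nat.count Nat.Prime 453 = 87 := cs_false cN452 (by norm_num)
lemma cN454 : Nat.count Nat.Prime 454 = 87 := cs_false cN453 (by norm_num)
lemma cN455 : Nat.count Nat.Prime 455 = 87 := cs_false cN454 (by norm_num)
lemma cN456 : Nat.count Nat.Prime 456 = 87 := cs_false cN455 (by norm_num)
lemma cN457 : Nat.count Nat.Prime 457 = 87 := cs_false cN456 (by norm_num)
lemma cN458 : Nat.count Nat.Prime 458 = 88 := cs_true cN457 (by norm_num)
lemma cN459 : Nat.count Nat.Prime 459 = 88 := cs_false cN458 (by norm_num)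
lemma cN460 : Nat.count Nat.Prime 460 = 88 := cs_false cN459 (by norm_num)
lemma cN461 : Nat.count Nat.Prime 461 = 88 := cs_false cN460 (by norm_num)
lemma cN462 : Nat.count Nat.Prime 462 = 89 := cs_true cN461 (by norm_num)
lemma cN463 : Nat.count Nat.Prime 463 = 89 := cs_false cN462 (by norm_num)
lemma cN464 : Nat.count Nat.Prime 464 = 90 := cs_true cN463 (by norm_num)
lemma cN465 : Nat.count Nat.Prime 465 = 90 := cs_false cN464 (by norm_num)
lemma cN466 : Nat.count Nat.Prime 466 = 90 := cs_false cN465 (by norm_num)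
lemma cN467 : Nat.count Nat.Prime 467 = 90 := cs_false cN466 (by norm_num)
lemma cN468 : Nat.count Nat.Prime 468 = 91 := cs_true cN467 (by norm_num)
lemma cN469 : Nat.count Nat.Prime 469 = 91 := cs_false cN468 (by norm_num)
lemma cN470 : Nat.count Nat.Prime 470 = 91 := cs_false cN469 (by norm_num)
lemma cN471 : Nat.count Nat.Prime 471 = 91 := cs_false cN470 (by norm_num)
lemma cN472 : Nat.count Nat.Prime 472 = 91 := cs_false cN471 (by norm_num)
lemma cN473 : Nat.count Nat.Prime 473 = 91 := cs_false cN472 (by norm_num)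
lemma cN474 : Nat.count Nat.Prime 474 = 91 := cs_false cN473 (by norm_num)
lemma cN475 : Nat.count Nat.Prime 475 = 91 := cs_false cN474 (by norm_num)
lemma cN476 : Nat.count Nat.Prime 476 = 91 := cs_false cN475 (by norm_num)
lemma cN477 : Nat.count Nat.Prime 477 = 91 := cs_false cN476 (by norm_num)
lemma cN478 : Nat.count Nat.Prime 478 = 91 := cs_false cN477 (by norm_num)
lemma cN479 : Nat.count Nat.Prime 479 = 91 := cs_false cN478 (by norm_num)
lemma cN480 : Nat.count Nat.Prime 480 = 92 := cs_true cN479 (by norm_num)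
lemma cN481 : Nat.count Nat.Prime 481 = 92 := cs_false cN480 (by norm_num)
lemma cN482 : Nat.count Nat.Prime 482 = 92 := cs_false cN481 (by norm_num)
lemma cN483 : Nat.count Nat.Prime 483 = 92 := cs_false cN482 (by norm_num)
lemma cN484 : Nat.count Nat.Prime 484 = 92 := cs_false cN483 (by norm_num)
lemma cN485 : Nat.count Nat.Prime 485 = 92 := cs_false cN484 (by norm_num)
lemma cN486 : Nat.count Nat.Prime 486 = 92 := cs_false cN485 (by norm_num)
lemma cN487 : Nat.count Nat.Prime 487 = 92 := cs_false cN486 (by norm_num)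
lemma cN488 : Nat.count Nat.Prime 488 = 93 := cs_true cN487 (by norm_num)
lemma cN489 : Nat.count Nat.Prime 489 = 93 := cs_false cN488 (by norm_num)
lemma cN490 : Nat.count Nat.Prime 490 = 93 := cs_false cN489 (by norm_num)
lemma cN491 : Nat.count Nat.Prime 491 = 93 := cs_false cN490 (by norm_num)
lemma cN492 : Nat.count Nat.Prime 492 = 94 := cs_true cN491 (by norm_num)
lemma cN493 : Nat.count Nat.Prime 493 = 94 := cs_false cN492 (by norm_num)
lemma cN494 : Nat.count Nat.Prime 494 = 94 := cs_false cN493 (by norm_num)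
lemma cN495 : Nat.count Nat.Prime 495 = 94 := cs_false cN494 (by norm_num)
lemma cN496 : Nat.count Nat.Prime 496 = 94 := cs_false cN495 (by norm_num)
lemma cN497 : Nat.count Nat.Prime 497 = 94 := cs_false cN496 (by norm_num)
lemma cN498 : Nat.count Nat.Prime 498 = 94 := cs_false cN497 (by norm_num)
lemma cN499 : Nat.count Nat.Prime 499 = 94 := cs_false cN498 (by norm_num)
lemma cN500 : Nat.count Nat.Prime 500 = 95 := cs_true cN499 (by norm_num)
lemma cN501 : Nat.count Nat.Prime 501 = 95 := cs_false cN500 (by norm_num)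
lemma cN502 : Nat.count Nat.Prime 502 = 95 := cs_false cN501 (by norm_num)
lemma cN503 : Nat.count Nat.Prime 503 = 95 := cs_false cN502 (by norm_num)
lemma cN504 : Nat.count Nat.Prime 504 = 96 := cs_true cN503 (by norm_num)
lemma cN505 : Nat.count Nat.Prime 505 = 96 := cs_false cN504 (by norm_num)
lemma cN506 : Nat.count Nat.Prime 506 = 96 := cs_false cN505 (by norm_num)
lemma cN507 : Nat.count Nat.Prime 507 = 96 := cs_false cN506 (by norm_num)
lemma cN508 : Nat.count Nat.Prime 508 = 96 := cs_false cN507 (by norm_num)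
lemma cN509 : Nat.count Nat.Prime 509 = 96 := cs_false cN508 (by norm_num)
lemma cN510 : Nat.count Nat.Prime 510 = 97 := cs_true cN509 (by norm_num)
lemma cN511 : Nat.count Nat.Prime 511 = 97 := cs_false cN510 (by norm_num)
lemma cN512 : Nat.count Nat.Prime 512 = 97 := cs_false cN511 (by norm_num)
lemma cN513 : Nat.count Nat.Prime 513 = 97 := cs_false cN512 (by norm_num)
lemma cN514 : Nat.count Nat.Prime 514 = 97 := cs_false cN513 (by norm_num)
lemma cN515 : Nat.count Nat.Prime 515 = 97 := cs_false cN514 (by norm_num)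
lemma cN516 : Nat.count Nat.Prime 516 = 97 := cs_false cN515 (by norm_num)
lemma cN517 : Nat.count Nat.Prime 517 = 97 := cs_false cN516 (by norm_num)
lemma cN518 : Nat.count Nat.Prime 518 = 97 := cs_false cN517 (by norm_num)
lemma cN519 : Nat.count Nat.Prime 519 = 97 := cs_false cN518 (by norm_num)
lemma cN520 : Nat.count Nat.Prime 520 = 97 := cs_false cN519 (by norm_num)
lemma cN521 : Nat.count Nat.Prime 521 = 97 := cs_false cN520 (by norm_num)
lemma cN522 : Nat.count Nat.Prime 522 = 98 := cs_true cN521 (by norm_num)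
lemma cN523 : Nat.count Nat.Prime 523 = 98 := cs_false cN522 (by norm_num)

/- nth prime values -/
lemma nth0 : Nat.nth Nat.Prime 0 = 2 := by
  have h := Nat.nth_count (p := Nat.Prime) (n := 2) (by norm_num)
  rwa [cN2] at h
lemma nth1 : Nat.nth Nat.Prime 1 = 3 := by
  have h := Nat.nth_count (p := Nat.Prime) (n := 3) (by norm_num)
  rwa [cN3] at h
lemma nth2 : Nat.nth Nat.Prime 2 = 5 := by
  have h := Nat.nth_count (p := Nat.Prime) (n := 5) (by norm_num)
  rwa [cN5] at h
lemma nth3 : Nat.nth Nat.Prime 3 = 7 := by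
  have h := Nat.nth_count (p := Nat.Prime) (n := 7) (by norm_num)
  rwa [cN7] at h
lemma nth4 : Nat.nth Nat.Prime 4 = 11 := by
  have h := Nat.nth_count (p := Nat.Prime) (n := 11) (by norm_num)
  rwa [cN11] at h
lemma nth5 : Nat.nth Nat.Prime 5 = 13 := by
  have h := Nat.nth_count (p := Nat.Prime) (n := 13) (by norm_num)
  rwa [cN13] at h
lemma nth6 : Nat.nth Nat.Prime 6 = 17 := by
  have h := Nat.nth_count (p := Nat.Prime) (n := 17) (by norm_num)
  rwa [cN17] at h
lemma nth7 : Nat.nth Nat.Prime 7 = 19 := by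
  have h := Nat.nth_count (p := Nat.Prime) (n := 19) (by norm_num)
  rwa [cN19] at h
lemma nth8 : Nat.nth Nat.Prime 8 = 23 := by
  have h := Nat.nth_count (p := Nat.Prime) (n := 23) (by norm_num)
  rwa [cN23] at h
lemma nth9 : Nat.nth Nat.Prime 9 = 29 := by
  have h := Nat.nth_count (p := Nat.Prime) (n := 29) (by norm_num)
  rwa [cN29] at h
lemma nth10 : Nat.nth Nat.Prime 10 = 31 := by
  have h := Nat.nth_count (p := Nat.Prime) (n := 31) (by norm_num)
  rwa [cN31] at h
lemma nth11 : Nat.nth Nat.Prime 11 = 37 := by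
  have h := Nat.nth_count (p := Nat.Prime) (n := 37) (by norm_num)
  rwa [cN37] at h
lemma nth12 : Nat.nth Nat.Prime 12 = 41 := by
  have h := Nat.nth_count (p := Nat.Prime) (n := 41) (by norm_num)
  rwa [cN41] at h
lemma nth13 : Nat.nth Nat.Prime 13 = 43 := by
  have h := Nat.nth_count (p := Nat.Prime) (n := 43) (by norm_num)
  rwa [cN43] at h
lemma nth14 : Nat.nth Nat.Prime 14 = 47 := by
  have h := Nat.nth_count (p := Nat.Prime) (n := 47) (by norm_num)
  rwa [cN47] at h
lemma nth15 : Nat.nth Nat.Prime 15 = 53 := by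
  have h := Nat.nth_count (p := Nat.Prime) (n := 53) (by norm_num)
  rwa [cN53] at h
lemma nth16 : Nat.nth Nat.Prime 16 = 59 := by
  have h := Nat.nth_count (p := Nat.Prime) (n := 59) (by norm_num)
  rwa [cN59] at h
lemma nth17 : Nat.nth Nat.Prime 17 = 61 := by
  have h := Nat.nth_count (p := Nat.Prime) (n := 61) (by norm_num)
  rwa [cN61] at h
lemma nth18 : Nat.nth Nat.Prime 18 = 67 := by
  have h := Nat.nth_count (p := Nat.Prime) (n := 67) (by norm_num)
  rwa [cN67] at h
lemma nth19 : Nat.nth Nat.Prime 19 = 71 := by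
  have h := Nat.nth_count (p := Nat.Prime) (n := 71) (by norm_num)
  rwa [cN71] at h
lemma nth20 : Nat.nth Nat.Prime 20 = 73 := by
  have h := Nat.nth_count (p := Nat.Prime) (n := 73) (by norm_num)
  rwa [cN73] at h
lemma nth21 : Nat.nth Nat.Prime 21 = 79 := by
  have h := Nat.nth_count (p := Nat.Prime) (n := 79) (by norm_num)
  rwa [cN79] at h
lemma nth22 : Nat.nth Nat.Prime 22 = 83 := by
  have h := Nat.nth_count (p := Nat.Prime) (n := 83) (by norm_num)
  rwa [cN83] at h
lemma nth23 : Nat.nth Nat.Prime 23 = 89 := by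
  have h := Nat.nth_count (p := Nat.Prime) (n := 89) (by norm_num)
  rwa [cN89] at h
lemma nth24 : Nat.nth Nat.Prime 24 = 97 := by
  have h := Nat.nth_count (p := Nat.Prime) (n := 97) (by norm_num)
  rwa [cN97] at h
lemma nth25 : Nat.nth Nat.Prime 25 = 101 := by
  have h := Nat.nth_count (p := Nat.Prime) (n := 101) (by norm_num)
  rwa [cN101] at h
lemma nth26 : Nat.nth Nat.Prime 26 = 103 := by
  have h := Nat.nth_count (p := Nat.Prime) (n := 103) (by norm_num)
  rwa [cN103] at h
lemma nth27 : Nat.nth Nat.Prime 27 = 107 := by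
  have h := Nat.nth_count (p := Nat.Prime) (n := 107) (by norm_num)
  rwa [cN107] at h
lemma nth28 : Nat.nth Nat.Prime 28 = 109 := by
  have h := Nat.nth_count (p := Nat.Prime) (n := 109) (by norm_num)
  rwa [cN109] at h
lemma nth29 : Nat.nth Nat.Prime 29 = 113 := by
  have h := Nat.nth_count (p := Nat.Prime) (n := 113) (by norm_num)
  rwa [cN113] at h
lemma nth30 : Nat.nth Nat.Prime 30 = 127 := by
  have h := Nat.nth_count (p := Nat.Prime) (n := 127) (by norm_num)
  rwa [cN127] at h
lemma nth31 : Nat.nth Nat.Prime 31 = 131 := by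
  have h := Nat.nth_count (p := Nat.Prime) (n := 131) (by norm_num)
  rwa [cN131] at h
lemma nth32 : Nat.nth Nat.Prime 32 = 137 := by
  have h := Nat.nth_count (p := Nat.Prime) (n := 137) (by norm_num)
  rwa [cN137] at h
lemma nth33 : Nat.nth Nat.Prime 33 = 139 := by
  have h := Nat.nth_count (p := Nat.Prime) (n := 139) (by norm_num)
  rwa [cN139] at h
lemma nth34 : Nat.nth Nat.Prime 34 = 149 := by
  have h := Nat.nth_count (p := Nat.Prime) (n := 149) (by norm_num)
  rwa [cN149] at h
lemma nth35 : Nat.nth Nat.Prime 35 = 151 := by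
  have h := Nat.nth_count (p := Nat.Prime) (n := 151) (by norm_num)
  rwa [cN151] at h
lemma nth36 : Nat.nth Nat.Prime 36 = 157 := by
  have h := Nat.nth_count (p := Nat.Prime) (n := 157) (by norm_num)
  rwa [cN157] at h
lemma nth37 : Nat.nth Nat.Prime 37 = 163 := by
  have h := Nat.nth_count (p := Nat.Prime) (n := 163) (by norm_num)
  rwa [cN163] at h
lemma nth38 : Nat.nth Nat.Prime 38 = 167 := by
  have h := Nat.nth_count (p := Nat.Prime) (n := 167) (by norm_num)
  rwa [cN167] at h
lemma nth39 : Nat.nth Nat.Prime 39 = 173 := by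
  have h := Nat.nth_count (p := Nat.Prime) (n := 173) (by norm_num)
  rwa [cN173] at h
lemma nth40 : Nat.nth Nat.Prime 40 = 179 := by
  have h := Nat.nth_count (p := Nat.Prime) (n := 179) (by norm_num)
  rwa [cN179] at h
lemma nth41 : Nat.nth Nat.Prime 41 = 181 := by
  have h := Nat.nth_count (p := Nat.Prime) (n := 181) (by norm_num)
  rwa [cN181] at h
lemma nth42 : Nat.nth Nat.Prime 42 = 191 := by
  have h := Nat.nth_count (p := Nat.Prime) (n := 191) (by norm_num)
  rwa [cN191] at h
lemma nth43 : Nat.nth Nat.Prime 43 = 193 := by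
  have h := Nat.nth_count (p := Nat.Prime) (n := 193) (by norm_num)
  rwa [cN193] at h
lemma nth44 : Nat.nth Nat.Prime 44 = 197 := by
  have h := Nat.nth_count (p := Nat.Prime) (n := 197) (by norm_num)
  rwa [cN197] at h
lemma nth45 : Nat.nth Nat.Prime 45 = 199 := by
  have h := Nat.nth_count (p := Nat.Prime) (n := 199) (by norm_num)
  rwa [cN199] at h
lemma nth46 : Nat.nth Nat.Prime 46 = 211 := by
  have h := Nat.nth_count (p := Nat.Prime) (n := 211) (by norm_num)
  rwa [cN211] at h
lemma nth47 : Nat.nth Nat.Prime 47 = 223 := by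
  have h := Nat.nth_count (p := Nat.Prime) (n := 223) (by norm_num)
  rwa [cN223] at h
lemma nth48 : Nat.nth Nat.Prime 48 = 227 := by
  have h := Nat.nth_count (p := Nat.Prime) (n := 227) (by norm_num)
  rwa [cN227] at h
lemma nth49 : Nat.nth Nat.Prime 49 = 229 := by
  have h := Nat.nth_count (p := Nat.Prime) (n := 229) (by norm_num)
  rwa [cN229] at h
lemma nth50 : Nat.nth Nat.Prime 50 = 233 := by
  have h := Nat.nth_count (p := Nat.Prime) (n := 233) (by norm_num)
  rwa [cN233] at h
lemma nth51 : Nat.nth Nat.Prime 51 = 239 := by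
  have h := Nat.nth_count (p := Nat.Prime) (n := 239) (by norm_num)
  rwa [cN239] at h
lemma nth52 : Nat.nth Nat.Prime 52 = 241 := by
  have h := Nat.nth_count (p := Nat.Prime) (n := 241) (by norm_num)
  rwa [cN241] at h
lemma nth53 : Nat.nth Nat.Prime 53 = 251 := by
  have h := Nat.nth_count (p := Nat.Prime) (n := 251) (by norm_num)
  rwa [cN251] at h
lemma nth54 : Nat.nth Nat.Prime 54 = 257 := by
  have h := Nat.nth_count (p := Nat.Prime) (n := 257) (by norm_num)
  rwa [cN257] at h
lemma nth55 : Nat.nth Nat.Prime 55 = 263 := by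
  have h := Nat.nth_count (p := Nat.Prime) (n := 263) (by norm_num)
  rwa [cN263] at h
lemma nth56 : Nat.nth Nat.Prime 56 = 269 := by
  have h := Nat.nth_count (p := Nat.Prime) (n := 269) (by norm_num)
  rwa [cN269] at h
lemma nth57 : Nat.nth Nat.Prime 57 = 271 := by
  have h := Nat.nth_count (p := Nat.Prime) (n := 271) (by norm_num)
  rwa [cN271] at h
lemma nth58 : Nat.nth Nat.Prime 58 = 277 := by
  have h := Nat.nth_count (p := Nat.Prime) (n := 277) (by norm_num)
  rwa [cN277] at h
lemma nth59 : Nat.nth Nat.Prime 59 = 281 := by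
  have h := Nat.nth_count (p := Nat.Prime) (n := 281) (by norm_num)
  rwa [cN281] at h
lemma nth60 : Nat.nth Nat.Prime 60 = 283 := by
  have h := Nat.nth_count (p := Nat.Prime) (n := 283) (by norm_num)
  rwa [cN283] at h
lemma nth61 : Nat.nth Nat.Prime 61 = 293 := by
  have h := Nat.nth_count (p := Nat.Prime) (n := 293) (by norm_num)
  rwa [cN293] at h
lemma nth62 : Nat.nth Nat.Prime 62 = 307 := by
  have h := Nat.nth_count (p := Nat.Prime) (n := 307) (by norm_num)
  rwa [cN307] at h
lemma nth63 : Nat.nth Nat.Prime 63 = 311 := by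
  have h := Nat.nth_count (p := Nat.Prime) (n := 311) (by norm_num)
  rwa [cN311] at h
lemma nth64 : Nat.nth Nat.Prime 64 = 313 := by
  have h := Nat.nth_count (p := Nat.Prime) (n := 313) (by norm_num)
  rwa [cN313] at h
lemma nth65 : Nat.nth Nat.Prime 65 = 317 := by
  have h := Nat.nth_count (p := Nat.Prime) (n := 317) (by norm_num)
  rwa [cN317] at h
lemma nth66 : Nat.nth Nat.Prime 66 = 331 := by
  have h := Nat.nth_count (p := Nat.Prime) (n := 331) (by norm_num)
  rwa [cN331] at h
lemma nth67 : Nat.nth Nat.Prime 67 = 337 := by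
  have h := Nat.nth_count (p := Nat.Prime) (n := 337) (by norm_num)
  rwa [cN337] at h
lemma nth68 : Nat.nth Nat.Prime 68 = 347 := by
  have h := Nat.nth_count (p := Nat.Prime) (n := 347) (by norm_num)
  rwa [cN347] at h
lemma nth69 : Nat.nth Nat.Prime 69 = 349 := by
  have h := Nat.nth_count (p := Nat.Prime) (n := 349) (by norm_num)
  rwa [cN349] at h
lemma nth70 : Nat.nth Nat.Prime 70 = 353 := by
  have h := Nat.nth_count (p := Nat.Prime) (n := 353) (by norm_num)
  rwa [cN353] at h
lemma nth71 : Nat.nth Nat.Prime 71 = 359 := by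
  have h := Nat.nth_count (p := Nat.Prime) (n := 359) (by norm_num)
  rwa [cN359] at h
lemma nth72 : Nat.nth Nat.Prime 72 = 367 := by
  have h := Nat.nth_count (p := Nat.Prime) (n := 367) (by norm_num)
  rwa [cN367] at h
lemma nth73 : Nat.nth Nat.Prime 73 = 373 := by
  have h := Nat.nth_count (p := Nat.Prime) (n := 373) (by norm_num)
  rwa [cN373] at h
lemma nth74 : Nat.nth Nat.Prime 74 = 379 := by
  have h := Nat.nth_count (p := Nat.Prime) (n := 379) (by norm_num)
  rwa [cN379] at h
lemma nth75 : Nat.nth Nat.Prime 75 = 383 := by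
  have h := Nat.nth_count (p := Nat.Prime) (n := 383) (by norm_num)
  rwa [cN383] at h
lemma nth76 : Nat.nth Nat.Prime 76 = 389 := by
  have h := Nat.nth_count (p := Nat.Prime) (n := 389) (by norm_num)
  rwa [cN389] at h
lemma nth77 : Nat.nth Nat.Prime 77 = 397 := by
  have h := Nat.nth_count (p := Nat.Prime) (n := 397) (by norm_num)
  rwa [cN397] at h
lemma nth78 : Nat.nth Nat.Prime 78 = 401 := by
  have h := Nat.nth_count (p := Nat.Prime) (n := 401) (by norm_num)
  rwa [cN401] at h
lemma nth79 : Nat.nth Nat.Prime 79 = 409 := by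
  have h := Nat.nth_count (p := Nat.Prime) (n := 409) (by norm_num)
  rwa [cN409] at h
lemma nth80 : Nat.nth Nat.Prime 80 = 419 := by
  have h := Nat.nth_count (p := Nat.Prime) (n := 419) (by norm_num)
  rwa [cN419] at h
lemma nth81 : Nat.nth Nat.Prime 81 = 421 := by
  have h := Nat.nth_count (p := Nat.Prime) (n := 421) (by norm_num)
  rwa [cN421] at h
lemma nth82 : Nat.nth Nat.Prime 82 = 431 := by
  have h := Nat.nth_count (p := Nat.Prime) (n := 431) (by norm_num)
  rwa [cN431] at h
lemma nth83 : Nat.nth Nat.Prime 83 = 433 := by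
  have h := Nat.nth_count (p := Nat.Prime) (n := 433) (by norm_num)
  rwa [cN433] at h
lemma nth84 : Nat.nth Nat.Prime 84 = 439 := by
  have h := Nat.nth_count (p := Nat.Prime) (n := 439) (by norm_num)
  rwa [cN439] at h
lemma nth85 : Nat.nth Nat.Prime 85 = 443 := by
  have h := Nat.nth_count (p := Nat.Prime) (n := 443) (by norm_num)
  rwa [cN443] at h
lemma nth86 : Nat.nth Nat.Prime 86 = 449 := by
  have h := Nat.nth_count (p := Nat.Prime) (n := 449) (by norm_num)
  rwa [cN449] at h
lemma nth87 : Nat.nth Nat.Prime 87 = 457 := by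
  have h := Nat.nth_count (p := Nat.Prime) (n := 457) (by norm_num)
  rwa [cN457] at h
lemma nth88 : Nat.nth Nat.Prime 88 = 461 := by
  have h := Nat.nth_count (p := Nat.Prime) (n := 461) (by norm_num)
  rwa [cN461] at h
lemma nth89 : Nat.nth Nat.Prime 89 = 463 := by
  have h := Nat.nth_count (p := Nat.Prime) (n := 463) (by norm_num)
  rwa [cN463] at h
lemma nth90 : Nat.nth Nat.Prime 90 = 467 := by
  have h := Nat.nth_count (p := Nat.Prime) (n := 467) (by norm_num)
  rwa [cN467] at h
lemma nth91 : Nat.nth Nat.Prime 91 = 479 := by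
  have h := Nat.nth_count (p := Nat.Prime) (n := 479) (by norm_num)
  rwa [cN479] at h
lemma nth92 : Nat.nth Nat.Prime 92 = 487 := by
  have h := Nat.nth_count (p := Nat.Prime) (n := 487) (by norm_num)
  rwa [cN487] at h
lemma nth93 : Nat.nth Nat.Prime 93 = 491 := by
  have h := Nat.nth_count (p := Nat.Prime) (n := 491) (by norm_num)
  rwa [cN491] at h
lemma nth94 : Nat.nth Nat.Prime 94 = 499 := by
  have h := Nat.nth_count (p := Nat.Prime) (n := 499) (by norm_num)
  rwa [cN499] at h
lemma nth95 : Nat.nth Nat.Prime 95 = 503 := by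
  have h := Nat.nth_count (p := Nat.Prime) (n := 503) (by norm_num)
  rwa [cN503] at h
lemma nth96 : Nat.nth Nat.Prime 96 = 509 := by
  have h := Nat.nth_count (p := Nat.Prime) (n := 509) (by norm_num)
  rwa [cN509] at h

lemma nth97lt : Nat.nth Nat.Prime 97 < 523 :=
  Nat.nth_lt_of_lt_count (by rw [cN523]; omega)

/- prime gap values -/
lemma hg2 : g 2 = 2 := by
  show p 3 - p 2 = 2
  rw [p, p]; norm_num [nth2, nth1]
lemma hg3 : g 3 = 2 := by
  show p 4 - p 3 = 2
  rw [p, p]; norm_num [nth3, nth2]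
lemma hg4 : g 4 = 4 := by
  show p 5 - p 4 = 4
  rw [p, p]; norm_num [nth4, nth3]
lemma hg5 : g 5 = 2 := by
  show p 6 - p 5 = 2
  rw [p, p]; norm_num [nth5, nth4]
lemma hg6 : g 6 = 4 := by
  show p 7 - p 6 = 4
  rw [p, p]; norm_num [nth6, nth5]
lemma hg7 : g 7 = 2 := by
  show p 8 - p 7 = 2
  rw [p, p]; norm_num [nth7, nth6]
lemma hg8 : g 8 = 4 := by
  show p 9 - p 8 = 4
  rw [p, p]; norm_num [nth8, nth7]
lemma hg9 : g 9 = 6 := by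
  show p 10 - p 9 = 6
  rw [p, p]; norm_num [nth9, nth8]
lemma hg10 : g 10 = 2 := by
  show p 11 - p 10 = 2
  rw [p, p]; norm_num [nth10, nth9]
lemma hg11 : g 11 = 6 := by
  show p 12 - p 11 = 6
  rw [p, p]; norm_num [nth11, nth10]
lemma hg12 : g 12 = 4 := by
  show p 13 - p 12 = 4
  rw [p, p]; norm_num [nth12, nth11]
lemma hg13 : g 13 = 2 := by
  show p 14 - p 13 = 2
  rw [p, p]; norm_num [nth13, nth12]
lemma hg14 : g 14 = 4 := by
  show p 15 - p 14 = 4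
  rw [p, p]; norm_num [nth14, nth13]
lemma hg15 : g 15 = 6 := by
  show p 16 - p 15 = 6
  rw [p, p]; norm_num [nth15, nth14]
lemma hg16 : g 16 = 6 := by
  show p 17 - p 16 = 6
  rw [p, p]; norm_num [nth16, nth15]
lemma hg17 : g 17 = 2 := by
  show p 18 - p 17 = 2
  rw [p, p]; norm_num [nth17, nth16]
lemma hg18 : g 18 = 6 := by
  show p 19 - p 18 = 6
  rw [p, p]; norm_num [nth18, nth17]
lemma hg19 : g 19 = 4 := by
  show p 20 - p 19 = 4
  rw [p, p]; norm_num [nth19, nth18]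
lemma hg20 : g 20 = 2 := by
  show p 21 - p 20 = 2
  rw [p, p]; norm_num [nth20, nth19]
lemma hg21 : g 21 = 6 := by
  show p 22 - p 21 = 6
  rw [p, p]; norm_num [nth21, nth20]
lemma hg22 : g 22 = 4 := by
  show p 23 - p 22 = 4
  rw [p, p]; norm_num [nth22, nth21]
lemma hg23 : g 23 = 6 := by
  show p 24 - p 23 = 6
  rw [p, p]; norm_num [nth23, nth22]
lemma hg24 : g 24 = 8 := by
  show p 25 - p 24 = 8
  rw [p, p]; norm_num [nth24, nth23]
lemma hg25 : g 25 = 4 := by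
  show p 26 - p 25 = 4
  rw [p, p]; norm_num [nth25, nth24]
lemma hg26 : g 26 = 2 := by
  show p 27 - p 26 = 2
  rw [p, p]; norm_num [nth26, nth25]
lemma hg27 : g 27 = 4 := by
  show p 28 - p 27 = 4
  rw [p, p]; norm_num [nth27, nth26]
lemma hg28 : g 28 = 2 := by
  show p 29 - p 28 = 2
  rw [p, p]; norm_num [nth28, nth27]
lemma hg29 : g 29 = 4 := by
  show p 30 - p 29 = 4
  rw [p, p]; norm_num [nth29, nth28]
lemma hg30 : g 30 = 14 := by
  show p 31 - p 30 = 14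
  rw [p, p]; norm_num [nth30, nth29]
lemma hg31 : g 31 = 4 := by
  show p 32 - p 31 = 4
  rw [p, p]; norm_num [nth31, nth30]
lemma hg32 : g 32 = 6 := by
  show p 33 - p 32 = 6
  rw [p, p]; norm_num [nth32, nth31]
lemma hg33 : g 33 = 2 := by
  show p 34 - p 33 = 2
  rw [p, p]; norm_num [nth33, nth32]
lemma hg34 : g 34 = 10 := by
  show p 35 - p 34 = 10
  rw [p, p]; norm_num [nth34, nth33]
lemma hg35 : g 35 = 2 := by
  show p 36 - p 35 = 2
  rw [p, p]; norm_num [nth35, nth34]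
lemma hg36 : g 36 = 6 := by
  show p 37 - p 36 = 6
  rw [p, p]; norm_num [nth36, nth35]
lemma hg37 : g 37 = 6 := by
  show p 38 - p 37 = 6
  rw [p, p]; norm_num [nth37, nth36]
lemma hg38 : g 38 = 4 := by
  show p 39 - p 38 = 4
  rw [p, p]; norm_num [nth38, nth37]
lemma hg39 : g 39 = 6 := by
  show p 40 - p 39 = 6
  rw [p, p]; norm_num [nth39, nth38]
lemma hg40 : g 40 = 6 := by
  show p 41 - p 40 = 6
  rw [p, p]; norm_num [nth40, nth39]
lemma hg41 : g 41 = 2 := by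
  show p 42 - p 41 = 2
  rw [p, p]; norm_num [nth41, nth40]
lemma hg42 : g 42 = 10 := by
  show p 43 - p 42 = 10
  rw [p, p]; norm_num [nth42, nth41]
lemma hg43 : g 43 = 2 := by
  show p 44 - p 43 = 2
  rw [p, p]; norm_num [nth43, nth42]
lemma hg44 : g 44 = 4 := by
  show p 45 - p 44 = 4
  rw [p, p]; norm_num [nth44, nth43]
lemma hg45 : g 45 = 2 := by
  show p 46 - p 45 = 2
  rw [p, p]; norm_num [nth45, nth44]
lemma hg46 : g 46 = 12 := by
  show p 47 - p 46 = 12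
  rw [p, p]; norm_num [nth46, nth45]
lemma hg47 : g 47 = 12 := by
  show p 48 - p 47 = 12
  rw [p, p]; norm_num [nth47, nth46]
lemma hg48 : g 48 = 4 := by
  show p 49 - p 48 = 4
  rw [p, p]; norm_num [nth48, nth47]
lemma hg49 : g 49 = 2 := by
  show p 50 - p 49 = 2
  rw [p, p]; norm_num [nth49, nth48]
lemma hg50 : g 50 = 4 := by
  show p 51 - p 50 = 4
  rw [p, p]; norm_num [nth50, nth49]
lemma hg51 : g 51 = 6 := by
  show p 52 - p 51 = 6
  rw [p, p]; norm_num [nth51, nth50]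
lemma hg52 : g 52 = 2 := by
  show p 53 - p 52 = 2
  rw [p, p]; norm_num [nth52, nth51]
lemma hg53 : g 53 = 10 := by
  show p 54 - p 53 = 10
  rw [p, p]; norm_num [nth53, nth52]
lemma hg54 : g 54 = 6 := by
  show p 55 - p 54 = 6
  rw [p, p]; norm_num [nth54, nth53]
lemma hg55 : g 55 = 6 := by
  show p 56 - p 55 = 6
  rw [p, p]; norm_num [nth55, nth54]
lemma hg56 : g 56 = 6 := by
  show p 57 - p 56 = 6
  rw [p, p]; norm_num [nth56, nth55]
lemma hg57 : g 57 = 2 := by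
  show p 58 - p 57 = 2
  rw [p, p]; norm_num [nth57, nth56]
lemma hg58 : g 58 = 6 := by
  show p 59 - p 58 = 6
  rw [p, p]; norm_num [nth58, nth57]
lemma hg59 : g 59 = 4 := by
  show p 60 - p 59 = 4
  rw [p, p]; norm_num [nth59, nth58]
lemma hg60 : g 60 = 2 := by
  show p 61 - p 60 = 2
  rw [p, p]; norm_num [nth60, nth59]
lemma hg61 : g 61 = 10 := by
  show p 62 - p 61 = 10
  rw [p, p]; norm_num [nth61, nth60]
lemma hg62 : g 62 = 14 := by
  show p 63 - p 62 = 14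
  rw [p, p]; norm_num [nth62, nth61]
lemma hg63 : g 63 = 4 := by
  show p 64 - p 63 = 4
  rw [p, p]; norm_num [nth63, nth62]
lemma hg64 : g 64 = 2 := by
  show p 65 - p 64 = 2
  rw [p, p]; norm_num [nth64, nth63]
lemma hg65 : g 65 = 4 := by
  show p 66 - p 65 = 4
  rw [p, p]; norm_num [nth65, nth64]
lemma hg66 : g 66 = 14 := by
  show p 67 - p 66 = 14
  rw [p, p]; norm_num [nth66, nth65]
lemma hg67 : g 67 = 6 := by
  show p 68 - p 67 = 6
  rw [p, p]; norm_num [nth67, nth66]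
lemma hg68 : g 68 = 10 := by
  show p 69 - p 68 = 10
  rw [p, p]; norm_num [nth68, nth67]
lemma hg69 : g 69 = 2 := by
  show p 70 - p 69 = 2
  rw [p, p]; norm_num [nth69, nth68]
lemma hg70 : g 70 = 4 := by
  show p 71 - p 70 = 4
  rw [p, p]; norm_num [nth70, nth69]
lemma hg71 : g 71 = 6 := by
  show p 72 - p 71 = 6
  rw [p, p]; norm_num [nth71, nth70]
lemma hg72 : g 72 = 8 := by
  show p 73 - p 72 = 8
  rw [p, p]; norm_num [nth72, nth71]
lemma hg73 : g 73 = 6 := by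
  show p 74 - p 73 = 6
  rw [p, p]; norm_num [nth73, nth72]
lemma hg74 : g 74 = 6 := by
  show p 75 - p 74 = 6
  rw [p, p]; norm_num [nth74, nth73]
lemma hg75 : g 75 = 4 := by
  show p 76 - p 75 = 4
  rw [p, p]; norm_num [nth75, nth74]
lemma hg76 : g 76 = 6 := by
  show p 77 - p 76 = 6
  rw [p, p]; norm_num [nth76, nth75]
lemma hg77 : g 77 = 8 := by
  show p 78 - p 77 = 8
  rw [p, p]; norm_num [nth77, nth76]
lemma hg78 : g 78 = 4 := by
  show p 79 - p 78 = 4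
  rw [p, p]; norm_num [nth78, nth77]
lemma hg79 : g 79 = 8 := by
  show p 80 - p 79 = 8
  rw [p, p]; norm_num [nth79, nth78]
lemma hg80 : g 80 = 10 := by
  show p 81 - p 80 = 10
  rw [p, p]; norm_num [nth80, nth79]
lemma hg81 : g 81 = 2 := by
  show p 82 - p 81 = 2
  rw [p, p]; norm_num [nth81, nth80]
lemma hg82 : g 82 = 10 := by
  show p 83 - p 82 = 10
  rw [p, p]; norm_num [nth82, nth81]
lemma hg83 : g 83 = 2 := by
  show p 84 - p 83 = 2
  rw [p, p]; norm_num [nth83, nth82]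
lemma hg84 : g 84 = 6 := by
  show p 85 - p 84 = 6
  rw [p, p]; norm_num [nth84, nth83]
lemma hg85 : g 85 = 4 := by
  show p 86 - p 85 = 4
  rw [p, p]; norm_num [nth85, nth84]
lemma hg86 : g 86 = 6 := by
  show p 87 - p 86 = 6
  rw [p, p]; norm_num [nth86, nth85]
lemma hg87 : g 87 = 8 := by
  show p 88 - p 87 = 8
  rw [p, p]; norm_num [nth87, nth86]
lemma hg88 : g 88 = 4 := by
  show p 89 - p 88 = 4
  rw [p, p]; norm_num [nth88, nth87]
lemma hg89 : g 89 = 2 := by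
  show p 90 - p 89 = 2
  rw [p, p]; norm_num [nth89, nth88]
lemma hg90 : g 90 = 4 := by
  show p 91 - p 90 = 4
  rw [p, p]; norm_num [nth90, nth89]
lemma hg91 : g 91 = 12 := by
  show p 92 - p 91 = 12
  rw [p, p]; norm_num [nth91, nth90]
lemma hg92 : g 92 = 8 := by
  show p 93 - p 92 = 8
  rw [p, p]; norm_num [nth92, nth91]
lemma hg93 : g 93 = 4 := by
  show p 94 - p 93 = 4
  rw [p, p]; norm_num [nth93, nth92]
lemma hg94 : g 94 = 8 := by
  show p 95 - p 94 = 8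
  rw [p, p]; norm_num [nth94, nth93]
lemma hg95 : g 95 = 4 := by
  show p 96 - p 95 = 4
  rw [p, p]; norm_num [nth95, nth94]
lemma hg96 : g 96 = 6 := by
  show p 97 - p 96 = 6
  rw [p, p]; norm_num [nth96, nth95]

lemma B_succ (k : ℕ) (hk : 1 ≤ k) : B (k+1) = B k + (g (k+1) : ℝ)/(k : ℝ) := by
  rw [B, B, Finset.sum_Icc_succ_top (by omega : 2 ≤ k+1)]
  have h : ((k:ℝ)+1) - 1 = k := by ring
  push_cast [h]
  ring_nf

lemma hBv2 : B 2 = 2 := by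
  rw [B, show Finset.Icc 2 2 = {2} from rfl, Finset.sum_singleton, hg2]; norm_num
lemma hBv3 : B 3 = 3 := by
  rw [show (3:ℕ) = 2+1 by norm_num, B_succ 2 (by norm_num), hBv2]
  norm_num [hg3]
lemma hBv4 : B 4 = (13:ℝ)/3 := by
  rw [show (4:ℕ) = 3+1 by norm_num, B_succ 3 (by norm_num), hBv3]
  norm_num [hg4]
lemma hBv5 : B 5 = (29:ℝ)/6 := by
  rw [show B 5 = B (4+1) from rfl, B_succ 4 (by norm_num), hBv4]
  norm_num [hg5]
lemma hBv6 : B 6 = (169:ℝ)/30 := by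
  rw [show (6:ℕ) = 5+1 by norm_num, B_succ 5 (by norm_num), hBv5]
  norm_num [hg6]
lemma hBv7 : B 7 = (179:ℝ)/30 := by
  rw [show (7:ℕ) = 6+1 by norm_num, B_succ 6 (by norm_num), hBv6]
  norm_num [hg7]
lemma hBv8 : B 8 = (1373:ℝ)/210 := by
  rw [show (8:ℕ) = 7+1 by norm_num, B_succ 7 (by norm_num), hBv7]
  norm_num [hg8]
lemma hBv9 : B 9 = (3061:ℝ)/420 := by
  rw [show (9:ℕ) = 8+1 by norm_num, B_succ 8 (by norm_num), hBv8]
  norm_num [hg9]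
lemma hBv10 : B 10 = (9463:ℝ)/1260 := by
  rw [show (10:ℕ) = 9+1 by norm_num, B_succ 9 (by norm_num), hBv9]
  norm_num [hg10]
lemma hBv11 : B 11 = (10219:ℝ)/1260 := by
  rw [show (11:ℕ) = 10+1 by norm_num, B_succ 10 (by norm_num), hBv10]
  norm_num [hg11]
lemma hBv12 : B 12 = (117449:ℝ)/13860 := by
  rw [show (12:ℕ) = 11+1 by norm_num, B_succ 11 (by norm_num), hBv11]
  norm_num [hg12]
lemma hBv13 : B 13 = (119759:ℝ)/13860 := by
  rw [show (13:ℕ) = 12+1 by norm_num, B_succ 12 (by norm_num), hBv12]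
  norm_num [hg13]
lemma hBv14 : B 14 = (1612307:ℝ)/180180 := by
  rw [show (14:ℕ) = 13+1 by norm_num, B_succ 13 (by norm_num), hBv13]
  norm_num [hg14]
lemma hBv15 : B 15 = (241361:ℝ)/25740 := by
  rw [show (15:ℕ) = 14+1 by norm_num, B_succ 14 (by norm_num), hBv14]
  norm_num [hg15]
lemma hBv16 : B 16 = (251657:ℝ)/25740 := by
  rw [show (16:ℕ) = 15+1 by norm_num, B_succ 15 (by norm_num), hBv15]
  norm_num [hg16]
lemma hBv17 : B 17 = (509749:ℝ)/51480 := by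
  rw [show (17:ℕ) = 16+1 by norm_num, B_succ 16 (by norm_num), hBv16]
  norm_num [hg17]
lemma hBv18 : B 18 = (8974613:ℝ)/875160 := by
  rw [show (18:ℕ) = 17+1 by norm_num, B_succ 17 (by norm_num), hBv17]
  norm_num [hg18]
lemma hBv19 : B 19 = (9169093:ℝ)/875160 := by
  rw [show (19:ℕ) = 18+1 by norm_num, B_succ 18 (by norm_num), hBv18]
  norm_num [hg19]
lemma hBv20 : B 20 = (175963087:ℝ)/16628040 := by
  rw [show (20:ℕ) = 19+1 by norm_num, B_succ 19 (by norm_num), hBv19]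
  norm_num [hg20]
lemma hBv21 : B 21 = (180951499:ℝ)/16628040 := by
  rw [show (21:ℕ) = 20+1 by norm_num, B_succ 20 (by norm_num), hBv20]
  norm_num [hg21]
lemma hBv22 : B 22 = (1288831213:ℝ)/116396280 := by
  rw [show (22:ℕ) = 21+1 by norm_num, B_succ 21 (by norm_num), hBv21]
  norm_num [hg22]
lemma hBv23 : B 23 = (1320575653:ℝ)/116396280 := by
  rw [show (23:ℕ) = 22+1 by norm_num, B_succ 22 (by norm_num), hBv22]
  norm_num [hg23]
lemma hBv24 : B 24 = (31304410259:ℝ)/2677114440 := by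
  rw [show (24:ℕ) = 23+1 by norm_num, B_succ 23 (by norm_num), hBv23]
  norm_num [hg24]
lemma hBv25 : B 25 = (31750595999:ℝ)/2677114440 := by
  rw [show (25:ℕ) = 24+1 by norm_num, B_succ 24 (by norm_num), hBv24]
  norm_num [hg25]
lemma hBv26 : B 26 = (159823825771:ℝ)/13385572200 := by
  rw [show (26:ℕ) = 25+1 by norm_num, B_succ 25 (by norm_num), hBv25]
  norm_num [hg26]
lemma hBv27 : B 27 = (161883144571:ℝ)/13385572200 := by
  rw [show (27:ℕ) = 26+1 by norm_num, B_succ 26 (by norm_num), hBv26]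
  norm_num [hg27]
lemma hBv28 : B 28 = (488624005313:ℝ)/40156716600 := by
  rw [show (28:ℕ) = 27+1 by norm_num, B_succ 27 (by norm_num), hBv27]
  norm_num [hg28]
lemma hBv29 : B 29 = (70622954159:ℝ)/5736673800 := by
  rw [show (29:ℕ) = 28+1 by norm_num, B_succ 28 (by norm_num), hBv28]
  norm_num [hg29]
lemma hBv30 : B 30 = (2128379103811:ℝ)/166363540200 := by
  rw [show (30:ℕ) = 29+1 by norm_num, B_succ 29 (by norm_num), hBv29]
  norm_num [hg30]
lemma hBv31 : B 31 = (2150560909171:ℝ)/166363540200 := by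
  rw [show (31:ℕ) = 30+1 by norm_num, B_succ 30 (by norm_num), hBv30]
  norm_num [hg31]
lemma hBv32 : B 32 = (67665569425501:ℝ)/5157269746200 := by
  rw [show (32:ℕ) = 31+1 by norm_num, B_succ 31 (by norm_num), hBv31]
  norm_num [hg32]
lemma hBv33 : B 33 = (135975797569277:ℝ)/10314539492400 := by
  rw [show (33:ℕ) = 32+1 by norm_num, B_succ 32 (by norm_num), hBv32]
  norm_num [hg33]
lemma hBv34 : B 34 = (139101415597277:ℝ)/10314539492400 := by
  rw [show (34:ℕ) = 33+1 by norm_num, B_succ 33 (by norm_num), hBv33]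
  norm_num [hg34]
lemma hBv35 : B 35 = (139708153214477:ℝ)/10314539492400 := by
  rw [show (35:ℕ) = 34+1 by norm_num, B_succ 34 (by norm_num), hBv34]
  norm_num [hg35]
lemma hBv36 : B 36 = (990334519892219:ℝ)/72201776446800 := by
  rw [show (36:ℕ) = 35+1 by norm_num, B_succ 35 (by norm_num), hBv35]
  norm_num [hg36]
lemma hBv37 : B 37 = (1002368149300019:ℝ)/72201776446800 := by
  rw [show (37:ℕ) = 36+1 by norm_num, B_succ 36 (by norm_num), hBv36]
  norm_num [hg37]
lemma hBv38 : B 38 = (37376428629887903:ℝ)/2671465728531600 := by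
  rw [show (38:ℕ) = 37+1 by norm_num, B_succ 37 (by norm_num), hBv37]
  norm_num [hg38]
lemma hBv39 : B 39 = (37798239008077103:ℝ)/2671465728531600 := by
  rw [show (39:ℕ) = 38+1 by norm_num, B_succ 38 (by norm_num), hBv38]
  norm_num [hg39]
lemma hBv40 : B 40 = (38209233735543503:ℝ)/2671465728531600 := by
  rw [show (40:ℕ) = 39+1 by norm_num, B_succ 39 (by norm_num), hBv39]
  norm_num [hg40]
lemma hBv41 : B 41 = (38342807021970083:ℝ)/2671465728531600 := by
  rw [show (41:ℕ) = 40+1 by norm_num, B_succ 40 (by norm_num), hBv40]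
  norm_num [hg41]
lemma hBv42 : B 42 = (1598769745186089403:ℝ)/109530094869795600 := by
  rw [show (42:ℕ) = 41+1 by norm_num, B_succ 41 (by norm_num), hBv41]
  norm_num [hg42]
lemma hBv43 : B 43 = (1603985463989413003:ℝ)/109530094869795600 := by
  rw [show (43:ℕ) = 42+1 by norm_num, B_succ 42 (by norm_num), hBv42]
  norm_num [hg43]
lemma hBv44 : B 44 = (69409495331023941529:ℝ)/4709794079401210800 := by
  rw [show (44:ℕ) = 43+1 by norm_num, B_succ 43 (by norm_num), hBv43]
  norm_num [hg44]
lemma hBv45 : B 45 = (69623576880087632929:ℝ)/4709794079401210800 := by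
  rw [show (45:ℕ) = 44+1 by norm_num, B_succ 44 (by norm_num), hBv44]
  norm_num [hg45]
lemma hBv46 : B 46 = (70879521967927955809:ℝ)/4709794079401210800 := by
  rw [show (46:ℕ) = 45+1 by norm_num, B_succ 45 (by norm_num), hBv45]
  norm_num [hg46]
lemma hBv47 : B 47 = (72108163901684793409:ℝ)/4709794079401210800 := by
  rw [show (47:ℕ) = 46+1 by norm_num, B_succ 46 (by norm_num), hBv46]
  norm_num [hg47]
lemma hBv48 : B 48 = (3407922879696790133423:ℝ)/221360321731856907600 := by
  rw [show (48:ℕ) = 47+1 by norm_num, B_succ 47 (by norm_num), hBv47]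
  norm_num [hg48]
lemma hBv49 : B 49 = (3417146226435617504573:ℝ)/221360321731856907600 := by
  rw [show (49:ℕ) = 48+1 by norm_num, B_succ 48 (by norm_num), hBv48]
  norm_num [hg49]
lemma hBv50 : B 50 = (24046515197467526479211:ℝ)/1549522252122998353200 := by
  rw [show (50:ℕ) = 49+1 by norm_num, B_succ 49 (by norm_num), hBv49]
  norm_num [hg50]
lemma hBv51 : B 51 = (4846491573544457256319:ℝ)/309904450424599670640 := by
  rw [show (51:ℕ) = 50+1 by norm_num, B_succ 50 (by norm_num), hBv50]
  norm_num [hg51]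
lemma hBv52 : B 52 = (4858644689247382733599:ℝ)/309904450424599670640 := by
  rw [show (52:ℕ) = 51+1 by norm_num, B_succ 51 (by norm_num), hBv51]
  norm_num [hg52]
lemma hBv53 : B 53 = (4918241698944421131799:ℝ)/309904450424599670640 := by
  rw [show (53:ℕ) = 52+1 by norm_num, B_succ 52 (by norm_num), hBv52]
  norm_num [hg53]
lemma hBv54 : B 54 = (262526236746601918009187:ℝ)/16424935872503782543920 := by
  rw [show (54:ℕ) = 53+1 by norm_num, B_succ 53 (by norm_num), hBv53]
  norm_num [hg54]
lemma hBv55 : B 55 = (264351229621324560514067:ℝ)/16424935872503782543920 := by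
  rw [show (55:ℕ) = 54+1 by norm_num, B_succ 54 (by norm_num), hBv54]
  norm_num [hg55]
lemma hBv56 : B 56 = (266143040807415882246131:ℝ)/16424935872503782543920 := by
  rw [show (56:ℕ) = 55+1 by norm_num, B_succ 55 (by norm_num), hBv55]
  norm_num [hg56]
lemma hBv57 : B 57 = (266729645660005303051271:ℝ)/16424935872503782543920 := by
  rw [show (57:ℕ) = 56+1 by norm_num, B_succ 56 (by norm_num), hBv56]
  norm_num [hg57]
lemma hBv58 : B 58 = (268458586278163595950631:ℝ)/16424935872503782543920 := by
  rw [show (58:ℕ) = 57+1 by norm_num, B_succ 57 (by norm_num), hBv57]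
  norm_num [hg58]
lemma hBv59 : B 59 = (269591340476267305091591:ℝ)/16424935872503782543920 := by
  rw [show (59:ℕ) = 58+1 by norm_num, B_succ 58 (by norm_num), hBv58]
  norm_num [hg59]
lemma hBv60 : B 60 = (15938738959844778565491709:ℝ)/969071216477723170091280 := by
  rw [show (60:ℕ) = 59+1 by norm_num, B_succ 59 (by norm_num), hBv59]
  norm_num [hg60]
lemma hBv61 : B 61 = (16100250829257732427173589:ℝ)/969071216477723170091280 := by
  rw [show (61:ℕ) = 60+1 by norm_num, B_succ 60 (by norm_num), hBv60]
  norm_num [hg61]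
lemma hBv62 : B 62 = (995682297615409802438866849:ℝ)/59113344205141113375568080 := by
  rw [show (62:ℕ) = 61+1 by norm_num, B_succ 61 (by norm_num), hBv61]
  norm_num [hg62]
lemma hBv63 : B 63 = (999496061757676971043742209:ℝ)/59113344205141113375568080 := by
  rw [show (63:ℕ) = 62+1 by norm_num, B_succ 62 (by norm_num), hBv62]
  norm_num [hg63]
lemma hBv64 : B 64 = (1001372675859427482579474529:ℝ)/59113344205141113375568080 := by
  rw [show (64:ℕ) = 63+1 by norm_num, B_succ 63 (by norm_num), hBv63]
  norm_num [hg64]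
lemma hBv65 : B 65 = (502533629936124401082723767:ℝ)/29556672102570556687784040 := by
  rw [show (65:ℕ) = 64+1 by norm_num, B_succ 64 (by norm_num), hBv64]
  norm_num [hg65]
lemma hBv66 : B 66 = (508899682388985751753938791:ℝ)/29556672102570556687784040 := by
  rw [show (66:ℕ) = 65+1 by norm_num, B_succ 65 (by norm_num), hBv65]
  norm_num [hg66]
lemma hBv67 : B 67 = (511586652580128529634646431:ℝ)/29556672102570556687784040 := by
  rw [show (67:ℕ) = 66+1 by norm_num, B_succ 66 (by norm_num), hBv66]
  norm_num [hg67]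
lemma hBv68 : B 68 = (34571872443894317052399151277:ℝ)/1980297030872227298081530680 := by
  rw [show (68:ℕ) = 67+1 by norm_num, B_succ 67 (by norm_num), hBv67]
  norm_num [hg68]
lemma hBv69 : B 69 = (34630116474214088443519196297:ℝ)/1980297030872227298081530680 := by
  rw [show (69:ℕ) = 68+1 by norm_num, B_succ 68 (by norm_num), hBv68]
  norm_num [hg69]
lemma hBv70 : B 70 = (1510648534873510404407782399:ℝ)/86099870907488143394849160 := by
  rw [show (70:ℕ) = 69+1 by norm_num, B_succ 69 (by norm_num), hBv69]
  norm_num [hg70]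
lemma hBv71 : B 71 = (1518028523808437959555912327:ℝ)/86099870907488143394849160 := by
  rw [show (71:ℕ) = 70+1 by norm_num, B_succ 70 (by norm_num), hBv70]
  norm_num [hg71]
lemma hBv72 : B 72 = (108468824157659000275628568497:ℝ)/6113090834431658181034290360 := by
  rw [show (72:ℕ) = 71+1 by norm_num, B_succ 71 (by norm_num), hBv71]
  norm_num [hg72]
lemma hBv73 : B 73 = (108978248393861638457381426027:ℝ)/6113090834431658181034290360 := by
  rw [show (73:ℕ) = 72+1 by norm_num, B_succ 72 (by norm_num), hBv72]
  norm_num [hg73]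
lemma hBv74 : B 74 = (7992090677758489556475049842131:ℝ)/446255630913511047215503196280 := by
  rw [show (74:ℕ) = 73+1 by norm_num, B_succ 73 (by norm_num), hBv73]
  norm_num [hg74]
lemma hBv75 : B 75 = (8016212603753814477946158123011:ℝ)/446255630913511047215503196280 := by
  rw [show (75:ℕ) = 74+1 by norm_num, B_succ 74 (by norm_num), hBv74]
  norm_num [hg75]
lemma hBv76 : B 76 = (40259565271134476808616991893567:ℝ)/2231278154567555236077515981400 := by
  rw [show (76:ℕ) = 75+1 by norm_num, B_succ 75 (by norm_num), hBv75]
  norm_num [hg76]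
lemma hBv77 : B 77 = (40494436655825798412414625154767:ℝ)/2231278154567555236077515981400 := by
  rw [show (77:ℕ) = 76+1 by norm_num, B_succ 76 (by norm_num), hBv76]
  norm_num [hg77]
lemma hBv78 : B 78 = (40610347209309827255847223387567:ℝ)/2231278154567555236077515981400 := by
  rw [show (78:ℕ) = 77+1 by norm_num, B_succ 77 (by norm_num), hBv77]
  norm_num [hg78]
lemma hBv79 : B 79 = (40839196250803935485188507077967:ℝ)/2231278154567555236077515981400 := by
  rw [show (79:ℕ) = 78+1 by norm_num, B_succ 78 (by norm_num), hBv78]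
  norm_num [hg79]
lemma hBv80 : B 80 = (3248609285359186455690667218973393:ℝ)/176270974210836863650123762530600 := by
  rw [show (80:ℕ) = 79+1 by norm_num, B_succ 79 (by norm_num), hBv79]
  norm_num [hg80]
lemma hBv81 : B 81 = (1626508029857228688640960156518329:ℝ)/88135487105418431825061881265300 := by
  rw [show (81:ℕ) = 80+1 by norm_num, B_succ 80 (by norm_num), hBv80]
  norm_num [hg81]
lemma hBv82 : B 82 = (4912166862573692892524755240393987:ℝ)/264406461316255295475185643795900 := by
  rw [show (82:ℕ) = 81+1 by norm_num, B_succ 81 (by norm_num), hBv81]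
  norm_num [hg82]
lemma hBv83 : B 83 = (4918615800654577168024150012193887:ℝ)/264406461316255295475185643795900 := by
  rw [show (83:ℕ) = 82+1 by norm_num, B_succ 82 (by norm_num), hBv82]
  norm_num [hg83]
lemma hBv84 : B 84 = (409831550222227436718855564874868021:ℝ)/21945736289249189524440408435059700 := by
  rw [show (84:ℕ) = 83+1 by norm_num, B_succ 83 (by norm_num), hBv83]
  norm_num [hg84]
lemma hBv85 : B 85 = (410876585283620255267638441467013721:ℝ)/21945736289249189524440408435059700 := by
  rw [show (85:ℕ) = 84+1 by norm_num, B_succ 84 (by norm_num), hBv84]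
  norm_num [hg85]
lemma hBv86 : B 86 = (412425696080508433351716587944782641:ℝ)/21945736289249189524440408435059700 := by
  rw [show (86:ℕ) = 85+1 by norm_num, B_succ 85 (by norm_num), hBv85]
  norm_num [hg86]
lemma hBv87 : B 87 = (414467159921368823074920346868974241:ℝ)/21945736289249189524440408435059700 := by
  rw [show (87:ℕ) = 86+1 by norm_num, B_succ 86 (by norm_num), hBv86]
  norm_num [hg87]
lemma hBv88 : B 88 = (415476159290989475466848641509666641:ℝ)/21945736289249189524440408435059700 := by
  rw [show (88:ℕ) = 87+1 by norm_num, B_succ 87 (by norm_num), hBv87]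
  norm_num [hg88]
lemma hBv89 : B 89 = (9453975591473546544455465203956814:ℝ)/498766733846572489191827464433175 := by
  rw [show (89:ℕ) = 88+1 by norm_num, B_succ 88 (by norm_num), hBv88]
  norm_num [hg89]
lemma hBv90 : B 90 = (843398894576531932413303713009889146:ℝ)/44390239312344951538072644334552575 := by
  rw [show (90:ℕ) = 89+1 by norm_num, B_succ 89 (by norm_num), hBv89]
  norm_num [hg90]
lemma hBv91 : B 91 = (849317593151511259285046732254496156:ℝ)/44390239312344951538072644334552575 := by
  rw [show (91:ℕ) = 90+1 by norm_num, B_succ 90 (by norm_num), hBv90]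
  norm_num [hg91]
lemma hBv92 : B 92 = (853220031772376749530152019668522756:ℝ)/44390239312344951538072644334552575 := by
  rw [show (92:ℕ) = 91+1 by norm_num, B_succ 91 (by norm_num), hBv91]
  norm_num [hg92]
lemma hBv93 : B 93 = (19668450970077010190731569096710575963:ℝ)/1020975504183933885375670819694709225 := by
  rw [show (93:ℕ) = 92+1 by norm_num, B_succ 92 (by norm_num), hBv92]
  norm_num [hg93]
lemma hBv94 : B 94 = (19756276819899284073344530027437002563:ℝ)/1020975504183933885375670819694709225 := by
  rw [show (94:ℕ) = 93+1 by norm_num, B_succ 93 (by norm_num), hBv93]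
  norm_num [hg94]
lemma hBv95 : B 95 = (19799722586034770621658388360189968913:ℝ)/1020975504183933885375670819694709225 := by
  rw [show (95:ℕ) = 94+1 by norm_num, B_succ 94 (by norm_num), hBv94]
  norm_num [hg95]
lemma hBv96 : B 96 = (19864205249456913814418957043539108443:ℝ)/1020975504183933885375670819694709225 := by
  rw [show (96:ℕ) = 95+1 by norm_num, B_succ 95 (by norm_num), hBv95]
  norm_num [hg96]

lemma B_mono {a b : ℕ} (h : a ≤ b) : B a ≤ B b := by
  apply Finset.sum_le_sum_of_subset_of_nonneg (Finset.Icc_subset_Icc_right h)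
  intro i hi _
  have h2 : 2 ≤ i := (Finset.mem_Icc.mp hi).1
  have h3 : (2:ℝ) ≤ (i:ℝ) := by exact_mod_cast h2
  apply div_nonneg (Nat.cast_nonneg _)
  linarith

section PART2
/- ## Numeric log constants -/

lemma log4_eq : Real.log 4 = 2 * Real.log 2 := by
  rw [show (4:ℝ) = 2^2 by norm_num, Real.log_pow]; push_cast; ring

lemma log4_sq_ub : (Real.log 4)^2 ≤ 1.9218121 := by
  have h1 : Real.log 4 ≤ 1.3862943616 := by
    rw [log4_eq]; nlinarith [Real.log_two_lt_d9]
  have h2 : (0:ℝ) ≤ Real.log 4 := by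
    rw [log4_eq]; nlinarith [Real.log_two_gt_d9]
  nlinarith

lemma log4_lb : (1.3862943606:ℝ) ≤ Real.log 4 := by
  rw [log4_eq]; nlinarith [Real.log_two_gt_d9]

lemma log4_ub : Real.log 4 ≤ (1.3862943616:ℝ) := by
  rw [log4_eq]; nlinarith [Real.log_two_lt_d9]

lemma log96_lb : (4.5599:ℝ) ≤ Real.log 96 := by
  have h : (96:ℝ) = 2^6 * (1 + 1/2) := by norm_num
  rw [h, Real.log_mul (by norm_num) (by norm_num), Real.log_pow]
  have h2 := log_cubic_lb (x := 1/2) (by norm_num)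
  have h3 := Real.log_two_gt_d9
  push_cast
  nlinarith

lemma loglog_lb {t : ℝ} (ht : 4.5599 ≤ t) : (1.5172:ℝ) ≤ Real.log t := by
  have h1 : Real.log 4.5599 ≤ Real.log t := Real.log_le_log (by norm_num) ht
  have h : (4.5599:ℝ) = 2^2 * (1 + 0.139975) := by norm_num
  rw [h, Real.log_mul (by norm_num) (by norm_num), Real.log_pow] at h1
  have h2 := log_cubic_lb (x := 0.139975) (by norm_num)
  have h3 := Real.log_two_gt_d9
  push_cast at h1
  nlinarith

lemma log145_ub : Real.log 1.45 ≤ 0.37157 := by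
  have hsq : Real.log 1.45 + Real.log 1.45 = Real.log 2 + Real.log (1 + 0.05125) := by
    rw [← Real.log_mul (by norm_num) (by norm_num), ← Real.log_mul (by norm_num) (by norm_num)]
    norm_num
  have h2 := log_cubic_ub (x := 0.05125) (by norm_num)
  have h3 := Real.log_two_lt_d9
  nlinarith

lemma log5_ub : Real.log 5 ≤ 1.611 := by
  have h : (5:ℝ) = 2^2 * (1 + 1/4) := by norm_num
  rw [h, Real.log_mul (by norm_num) (by norm_num), Real.log_pow]
  have h2 := log_cubic_ub (x := 1/4) (by norm_num)
  have h3 := Real.log_two_lt_d9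
  push_cast
  nlinarith

lemma log_t_tangent5 {t : ℝ} (ht : 0 < t) : Real.log t ≤ 0.2*t + 0.611 := by
  have h := log_tangent (x := t) (c := 5) ht (by norm_num)
  have := log5_ub
  nlinarith

lemma log97_ub : Real.log 97 ≤ 4.8520303 := by
  have h1 : Real.log 97 ≤ Real.log 128 := Real.log_le_log (by norm_num) (by norm_num)
  have h : (128:ℝ) = 2^7 := by norm_num
  rw [h, Real.log_pow] at h1
  have h3 := Real.log_two_lt_d9
  push_cast at h1
  nlinarith

lemma log203_ub : Real.log (20/3) ≤ 1.8994 := by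
  have hsplit : Real.log (20/3) = Real.log 4 + Real.log (5/3) := by
    rw [← Real.log_mul (by norm_num) (by norm_num)]; norm_num
  have hsq : Real.log (5/3) + Real.log (5/3) = Real.log 2 + Real.log (1 + 7/18) := by
    rw [← Real.log_mul (by norm_num) (by norm_num), ← Real.log_mul (by norm_num) (by norm_num)]
    norm_num
  have h2 := log_cubic_ub (x := 7/18) (by norm_num)
  have h3 := Real.log_two_lt_d9
  have h4 := log4_ub
  nlinarith

lemma log_t_tangent203 {t : ℝ} (ht : 0 < t) : Real.log t ≤ 0.15*t + 0.8994 := by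
  have h := log_tangent (x := t) (c := 20/3) ht (by norm_num)
  have := log203_ub
  nlinarith

lemma log30_lb : (3.3990692:ℝ) ≤ Real.log 30 := by
  have h : (30:ℝ) = 2^5 * (15/16) := by norm_num
  have h2 : Real.log (16/15) ≤ 16/15 - 1 := Real.log_le_sub_one_of_pos (by norm_num)
  have h3 : Real.log (15/16) = - Real.log (16/15) := by
    rw [← Real.log_inv]; norm_num
  rw [h, Real.log_mul (by norm_num) (by norm_num), Real.log_pow, h3]
  have h4 := Real.log_two_gt_d9
  push_cast
  nlinarith

lemma log53_lb : (3.9544:ℝ) ≤ Real.log 53 := by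
  have h : (53:ℝ) = 2^5 * (1 + 21/32) := by norm_num
  rw [h, Real.log_mul (by norm_num) (by norm_num), Real.log_pow]
  have h2 := log_cubic_lb (x := 21/32) (by norm_num)
  have h3 := Real.log_two_gt_d9
  push_cast
  nlinarith

lemma log16_lb : (2.7725887:ℝ) ≤ Real.log 16 := by
  have h : (16:ℝ) = 2^4 := by norm_num
  rw [h, Real.log_pow]
  have h3 := Real.log_two_gt_d9
  push_cast
  nlinarith

lemma log32_lb : (3.4657359:ℝ) ≤ Real.log 32 := by
  have h : (32:ℝ) = 2^5 := by norm_num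
  rw [h, Real.log_pow]
  have h3 := Real.log_two_gt_d9
  push_cast
  nlinarith

end PART2
section PART3
set_option maxHeartbeats 1000000

/- ## The step bound -/

lemma SB {k : ℕ} (hk : 96 ≤ k) :
    (Nat.nth Nat.Prime (k+1) : ℝ) ≤
      (k:ℝ) * (1.45*(Real.log k + Real.log (Real.log k)) + 1.7) := by
  have hk0 : (96:ℝ) ≤ (k:ℝ) := by exact_mod_cast hk
  have hkpos : (0:ℝ) < (k:ℝ) := by linarith
  obtain ⟨t, htdef⟩ : ∃ t, t = Real.log k := ⟨_, rfl⟩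
  obtain ⟨lt, hltdef⟩ : ∃ lt, lt = Real.log t := ⟨_, rfl⟩
  rw [← htdef, ← hltdef]
  have ht : (4.5599:ℝ) ≤ t := by
    rw [htdef]; exact le_trans log96_lb (Real.log_le_log (by norm_num) hk0)
  have htpos : (0:ℝ) < t := by linarith
  have hlt : (1.5172:ℝ) ≤ lt := by rw [hltdef, htdef]; exact loglog_lb (htdef ▸ ht)
  have hltpos : (0:ℝ) < lt := by linarith
  obtain ⟨m, hmdef⟩ : ∃ m, m = 1.45*(t + lt) + 1.7 := ⟨_, rfl⟩
  rw [← hmdef]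
  have hm : (10.5:ℝ) ≤ m := by rw [hmdef]; linarith
  have hmpos : (0:ℝ) < m := by linarith
  rcases eq_or_lt_of_le hk with heq | hgt
  · -- k = 96
    subst heq
    have h5 : Nat.nth Nat.Prime (96+1) ≤ 522 := by
      have h := nth97lt
      simp only [show (96:ℕ)+1 = 97 from rfl]
      omega
    have h5' : (Nat.nth Nat.Prime (96+1) : ℝ) ≤ 522 := by exact_mod_cast h5
    have h6 : (96:ℝ) * 10.5 ≤ (96:ℝ) * m := by linarith
    push_cast
    linarith
  · -- k ≥ 97
    have hk97 : (97:ℝ) ≤ (k:ℝ) := by exact_mod_cast hgt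
    obtain ⟨n, hndef⟩ : ∃ n, n = ⌊(k:ℝ)*m/2⌋₊ := ⟨_, rfl⟩
    have hkm_pos : (0:ℝ) < (k:ℝ)*m/2 := by positivity
    have hn_le : (n:ℝ) ≤ (k:ℝ)*m/2 := hndef ▸ Nat.floor_le (le_of_lt hkm_pos)
    have hn_gt : (k:ℝ)*m/2 - 1 < (n:ℝ) := by
      have h := Nat.lt_floor_add_one ((k:ℝ)*m/2)
      rw [← hndef] at h
      push_cast at h
      linarith
    have hn1 : 1 ≤ n := by
      rw [hndef]
      apply Nat.le_floor
      push_cast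
      nlinarith
    have hn0 : 0 < n := hn1
    have hnpos : (0:ℝ) < (n:ℝ) := by exact_mod_cast hn0
    have hn1R : (1:ℝ) ≤ (n:ℝ) := by exact_mod_cast hn1
    -- upper bound on t + lt
    have hlt_tan : lt ≤ 0.2*t + 0.611 := hltdef ▸ log_t_tangent5 htpos
    have ht_tan : t ≤ (k:ℝ)/97 + 3.8520303 := by
      have h := log_tangent (x := (k:ℝ)) (c := 97) hkpos (by norm_num)
      have := log97_ub
      rw [← htdef] at h
      linarith
    have hs_ub : t + lt ≤ 0.0123712*(k:ℝ) + 5.2334364 := by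
      have : t ≤ (0.0103093:ℝ)*(k:ℝ) + 3.8520303 := by
        have : (k:ℝ)/97 ≤ 0.0103093*(k:ℝ) := by
          rw [div_le_iff₀ (by norm_num : (0:ℝ) < 97)]
          nlinarith
        linarith
      linarith
    -- bound on log m
    have hlogm : Real.log m ≤ lt + 0.9627 := by
      have hm_le : m ≤ 1.45*(t + lt + 1.1725) := by rw [hmdef]; linarith
      have h1 : Real.log m ≤ Real.log (1.45*(t + lt + 1.1725)) :=
        Real.log_le_log hmpos hm_le
      have h1a : Real.log (1.45*(t + lt + 1.1725)) =
          Real.log 1.45 + Real.log (t + lt + 1.1725) :=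
        Real.log_mul (by norm_num) (by positivity)
      have h1b : Real.log (t + lt + 1.1725) = Real.log t + Real.log (1 + (lt + 1.1725)/t) := by
        rw [← Real.log_mul (ne_of_gt htpos) (by positivity)]
        congr 1
        field_simp
        ring
      have h2 : Real.log (1 + (lt + 1.1725)/t) ≤ (lt + 1.1725)/t := by
        have := Real.log_le_sub_one_of_pos (show (0:ℝ) < 1 + (lt + 1.1725)/t by positivity)
        linarith
      have h3 : (lt + 1.1725)/t ≤ 0.59113 := by
        rw [div_le_iff₀ htpos]
        nlinarith
      have h4 := log145_ub
      rw [h1a, h1b, ← hltdef] at h1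
      linarith
    -- the core counting inequality in ℝ
    have hcore : ((k:ℝ)+2) * (t + Real.log m) < ((n:ℝ)) * Real.log 4 := by
      have h4lo := log4_lb
      have h4hi := log4_ub
      have hks0 : (0:ℝ) ≤ (k:ℝ)*(t+lt) := by positivity
      have hlogm0 : (0:ℝ) ≤ t + Real.log m :=
        add_nonneg (le_of_lt htpos) (Real.log_nonneg (by linarith))
      have hstep1 : ((k:ℝ)+2) * (t + Real.log m) ≤ ((k:ℝ)+2) * (t + lt + 0.9627) := by
        apply mul_le_mul_of_nonneg_left _ (by linarith)
        linarith
      have hstep2 : ((k:ℝ)+2) * (t + lt + 0.9627) <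
          ((k:ℝ)*m/2 - 1) * 1.3862943606 := by
        rw [hmdef]
        nlinarith [hks0, hs_ub, hk97]
      have hstep3 : ((k:ℝ)*m/2 - 1) * 1.3862943606 ≤ ((n:ℝ)) * Real.log 4 := by
        have hcase : (0:ℝ) ≤ (k:ℝ)*m/2 - 1 := by nlinarith
        calc ((k:ℝ)*m/2 - 1) * 1.3862943606 ≤ ((k:ℝ)*m/2 - 1) * Real.log 4 := by
              apply mul_le_mul_of_nonneg_left h4lo hcase
          _ ≤ (n:ℝ) * Real.log 4 := by
              apply mul_le_mul_of_nonneg_right (le_of_lt hn_gt) (by linarith)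
      linarith
    -- transfer to ℕ
    have h2nposR : (0:ℝ) < 2*(n:ℝ) := by linarith
    have h2n_le : 2*(n:ℝ) ≤ (k:ℝ)*m := by linarith
    have hlog2n : Real.log (2*(n:ℝ)) ≤ t + Real.log m := by
      calc Real.log (2*(n:ℝ)) ≤ Real.log ((k:ℝ)*m) := Real.log_le_log h2nposR h2n_le
        _ = t + Real.log m := by
            rw [Real.log_mul (ne_of_gt hkpos) (ne_of_gt hmpos), htdef]
    have hmain : ((2*n:ℕ):ℝ)^(k+2) < ((4:ℕ):ℝ)^n := by
      have h2nN : (0:ℝ) < ((2*n:ℕ):ℝ) := by push_cast; linarith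
      have hlhs_pos : (0:ℝ) < ((2*n:ℕ):ℝ)^(k+2) := pow_pos h2nN _
      have hrhs_pos : (0:ℝ) < ((4:ℕ):ℝ)^n := by positivity
      have hlog : Real.log (((2*n:ℕ):ℝ)^(k+2)) < Real.log (((4:ℕ):ℝ)^n) := by
        rw [Real.log_pow, Real.log_pow]
        push_cast
        have e1 : (0:ℝ) ≤ Real.log (2*(n:ℝ)) := Real.log_nonneg (by linarith)
        calc ((k:ℝ)+2) * Real.log (2*(n:ℝ)) ≤ ((k:ℝ)+2) * (t + Real.log m) := by
              apply mul_le_mul_of_nonneg_left hlog2n (by linarith)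
          _ < (n:ℝ) * Real.log 4 := hcore
      have h := Real.exp_lt_exp.mpr hlog
      rwa [Real.exp_log hlhs_pos, Real.exp_log hrhs_pos] at h
    have hnat : (2*n)^(k+2) < 4^n := by exact_mod_cast hmain
    have hle : Nat.nth Nat.Prime (k+1) ≤ 2*n := cheb hn0 hnat
    have hleR : (Nat.nth Nat.Prime (k+1) : ℝ) ≤ 2*(n:ℝ) := by exact_mod_cast hle
    linarith

end PART3
section PART4
set_option maxHeartbeats 1000000

/- ## The invariant -/

lemma INV : ∀ k : ℕ, 96 ≤ k → B k - (Nat.nth Nat.Prime k : ℝ)/(k:ℝ) ≤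
    0.725*(Real.log k)^2 + 1.45*(Real.log k)*(Real.log (Real.log k))
      + 0.25*(Real.log k) - 11.9 := by
  intro k hk
  induction k, hk using Nat.le_induction with
  | base =>
    rw [hBv96, nth96]
    obtain ⟨t, htdef⟩ : ∃ t, t = Real.log (96:ℕ) := ⟨_, rfl⟩
    obtain ⟨lt, hltdef⟩ : ∃ lt, lt = Real.log t := ⟨_, rfl⟩
    rw [← htdef, ← hltdef]
    have ht : (4.5599:ℝ) ≤ t := by rw [htdef]; push_cast; exact log96_lb
    have hlt : (1.5172:ℝ) ≤ lt := by rw [hltdef]; exact loglog_lb ht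
    have h1 : (4.5599:ℝ)*1.5172 ≤ t*lt := by nlinarith
    have h2 : (4.5599:ℝ)^2 ≤ t^2 := by nlinarith
    push_cast
    nlinarith
  | succ k hk ih =>
    have hk0 : (96:ℝ) ≤ (k:ℝ) := by exact_mod_cast hk
    have hkpos : (0:ℝ) < (k:ℝ) := by linarith
    have hk1pos : (0:ℝ) < (k:ℝ)+1 := by linarith
    obtain ⟨t, htdef⟩ : ∃ t, t = Real.log k := ⟨_, rfl⟩
    obtain ⟨lt, hltdef⟩ : ∃ lt, lt = Real.log t := ⟨_, rfl⟩
    obtain ⟨t', htdef'⟩ : ∃ t', t' = Real.log ((k:ℝ)+1) := ⟨_, rfl⟩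
    obtain ⟨lt', hltdef'⟩ : ∃ lt', lt' = Real.log t' := ⟨_, rfl⟩
    have ht : (4.5599:ℝ) ≤ t := by
      rw [htdef]; exact le_trans log96_lb (Real.log_le_log (by norm_num) hk0)
    have htpos : (0:ℝ) < t := by linarith
    have htt' : t ≤ t' := by
      rw [htdef, htdef']; exact Real.log_le_log hkpos (by linarith)
    have ht'pos : (0:ℝ) < t' := by linarith
    have hlt : (1.5172:ℝ) ≤ lt := by rw [hltdef, htdef]; exact loglog_lb (htdef ▸ ht)
    have hltpos : (0:ℝ) < lt := by linarith
    have hltlt' : lt ≤ lt' := by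
      rw [hltdef, hltdef']; exact Real.log_le_log htpos htt'
    -- increment lower bounds
    have hdelta : 1/((k:ℝ)+1) ≤ t' - t := by
      have h := log_refl_lb (x := (k:ℝ)+1) (c := (k:ℝ)) hk1pos hkpos
      rw [← htdef, ← htdef'] at h
      have : 1 - (k:ℝ)/((k:ℝ)+1) = 1/((k:ℝ)+1) := by field_simp; ring
      linarith [this ▸ h]
    have hdelta0 : (0:ℝ) ≤ t' - t := by linarith
    have hsq : (t' - t)*(2*t) ≤ t'^2 - t^2 := by nlinarith
    have htlt : (t' - t)*(lt + 1) ≤ t'*lt' - t*lt := by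
      have h := log_refl_lb (x := t') (c := t) ht'pos htpos
      rw [← hltdef, ← hltdef'] at h
      have h2 : t' - t ≤ t'*(lt' - lt) := by
        have h3 : t'*(1 - t/t') = t' - t := by field_simp
        nlinarith [mul_le_mul_of_nonneg_left (show lt + (1 - t/t') ≤ lt' by linarith)
          (le_of_lt ht'pos)]
      nlinarith
    -- the B recursion
    have hmono : Nat.nth Nat.Prime k ≤ Nat.nth Nat.Prime (k+1) :=
      Nat.nth_monotone Nat.infinite_setOf_prime (Nat.le_succ k)
    have hgcast : (g (k+1) : ℝ) = (Nat.nth Nat.Prime (k+1):ℝ) - (Nat.nth Nat.Prime k:ℝ) := by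
      have hgval : g (k+1) = Nat.nth Nat.Prime (k+1) - Nat.nth Nat.Prime k := by
        rw [g, p, p]; simp
      rw [hgval, Nat.cast_sub hmono]
    have hBid : B (k+1) = B k + ((Nat.nth Nat.Prime (k+1):ℝ) - (Nat.nth Nat.Prime k:ℝ))/(k:ℝ) := by
      rw [B_succ k (by omega), hgcast]
    -- step bound
    have hSBlt := SB (k := k) hk
    rw [← htdef, ← hltdef] at hSBlt
    obtain ⟨m, hmdef⟩ : ∃ m, m = 1.45*(t + lt) + 1.7 := ⟨_, rfl⟩
    rw [← hmdef] at hSBlt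
    have hmpos : (0:ℝ) < m := by rw [hmdef]; linarith
    -- combine
    set P := (Nat.nth Nat.Prime (k+1) : ℝ) with hPdef
    set Q := (Nat.nth Nat.Prime k : ℝ) with hQdef
    have hPpos : (0:ℝ) ≤ P := Nat.cast_nonneg _
    have key : P/(k:ℝ) - P/((k:ℝ)+1) ≤ (t' - t)*m := by
      have e1 : P/(k:ℝ) - P/((k:ℝ)+1) = P/((k:ℝ)*((k:ℝ)+1)) := by
        field_simp
        ring
      rw [e1]
      have e2 : P/((k:ℝ)*((k:ℝ)+1)) ≤ ((k:ℝ)*m)/((k:ℝ)*((k:ℝ)+1)) := by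
        gcongr
      have e3 : ((k:ℝ)*m)/((k:ℝ)*((k:ℝ)+1)) = m/((k:ℝ)+1) := by
        field_simp
      have hd1 : (1:ℝ) ≤ (t' - t)*((k:ℝ)+1) := by
        have := (div_le_iff₀ hk1pos).mp hdelta
        linarith
      have e4 : m/((k:ℝ)+1) ≤ (t' - t)*m := by
        rw [div_le_iff₀ hk1pos]
        nlinarith [hd1, hmpos]
      calc P/((k:ℝ)*((k:ℝ)+1)) ≤ ((k:ℝ)*m)/((k:ℝ)*((k:ℝ)+1)) := e2
        _ = m/((k:ℝ)+1) := e3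
        _ ≤ (t' - t)*m := e4
    have hGdiff : (t' - t)*m ≤
        (0.725*t'^2 + 1.45*t'*lt' + 0.25*t') - (0.725*t^2 + 1.45*t*lt + 0.25*t) := by
      rw [hmdef]
      nlinarith [hsq, htlt, hdelta0]
    -- now conclude
    have ihR : B k - Q/(k:ℝ) ≤ 0.725*t^2 + 1.45*t*lt + 0.25*t - 11.9 := by
      have := ih
      rw [← htdef, ← hltdef] at this
      convert this using 3 <;> rw [hltdef, htdef]
    have goal' : B (k+1) - P/((k:ℝ)+1) ≤ 0.725*t'^2 + 1.45*t'*lt' + 0.25*t' - 11.9 := by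
      rw [hBid]
      have : B k + (P - Q)/(k:ℝ) - P/((k:ℝ)+1) =
          (B k - Q/(k:ℝ)) + (P/(k:ℝ) - P/((k:ℝ)+1)) := by
        field_simp
        ring
      rw [this]
      linarith
    push_cast
    rw [← htdef', ← hltdef']
    exact goal'

/- ## Final comparison for large k -/

lemma final_big {k : ℕ} (hk : 97 ≤ k) :
    B k < 49/30 + (Real.log k)^2 - (Real.log 4)^2 + 2*Real.log k := by
  have hk1 : 96 ≤ k - 1 := by omega
  have hINV := INV k (by omega)
  have hSB := SB (k := k - 1) hk1
  have hksub : (k - 1) + 1 = k := by omega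
  rw [hksub] at hSB
  have hkR : (97:ℝ) ≤ (k:ℝ) := by exact_mod_cast hk
  have hkpos : (0:ℝ) < (k:ℝ) := by linarith
  have hk1R : ((k-1:ℕ):ℝ) = (k:ℝ) - 1 := by
    push_cast [Nat.cast_sub (show 1 ≤ k by omega)]
    ring
  obtain ⟨t, htdef⟩ : ∃ t, t = Real.log k := ⟨_, rfl⟩
  obtain ⟨lt, hltdef⟩ : ∃ lt, lt = Real.log t := ⟨_, rfl⟩
  obtain ⟨t1, ht1def⟩ : ∃ t1, t1 = Real.log ((k:ℝ)-1) := ⟨_, rfl⟩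
  obtain ⟨lt1, hlt1def⟩ : ∃ lt1, lt1 = Real.log t1 := ⟨_, rfl⟩
  have hk1pos : (0:ℝ) < (k:ℝ) - 1 := by linarith
  have h96le : (96:ℝ) ≤ (k:ℝ) - 1 := by linarith
  have ht1 : (4.5599:ℝ) ≤ t1 := by
    rw [ht1def]; exact le_trans log96_lb (Real.log_le_log (by norm_num) h96le)
  have ht1t : t1 ≤ t := by
    rw [ht1def, htdef]; exact Real.log_le_log hk1pos (by linarith)
  have ht : (4.5599:ℝ) ≤ t := le_trans ht1 ht1t
  have htpos : (0:ℝ) < t := by linarith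
  have ht1pos : (0:ℝ) < t1 := by linarith
  have hlt1 : (1.5172:ℝ) ≤ lt1 := by rw [hlt1def]; exact loglog_lb ht1
  have hlt1lt : lt1 ≤ lt := by
    rw [hlt1def, hltdef]; exact Real.log_le_log ht1pos ht1t
  have hlt : (1.5172:ℝ) ≤ lt := le_trans hlt1 hlt1lt
  have hltpos : (0:ℝ) < lt := by linarith
  -- nth k ≤ k * m
  have hSB' : (Nat.nth Nat.Prime k : ℝ) ≤ ((k:ℝ)-1) * (1.45*(t1 + lt1) + 1.7) := by
    rw [ht1def, hlt1def, ht1def]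
    rw [← hk1R]
    exact hSB
  have hnth_ub : (Nat.nth Nat.Prime k : ℝ) ≤ (k:ℝ) * (1.45*(t + lt) + 1.7) := by
    have h1 : ((k:ℝ)-1) * (1.45*(t1 + lt1) + 1.7) ≤ (k:ℝ) * (1.45*(t + lt) + 1.7) := by
      nlinarith
    linarith
  have hrec : (Nat.nth Nat.Prime k : ℝ)/(k:ℝ) ≤ 1.45*(t + lt) + 1.7 := by
    rw [div_le_iff₀ hkpos]
    linarith [hnth_ub]
  -- invariant gives B k bound
  have hINV' : B k - (Nat.nth Nat.Prime k : ℝ)/(k:ℝ) ≤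
      0.725*t^2 + 1.45*t*lt + 0.25*t - 11.9 := by
    have := hINV
    rw [← htdef] at this
    convert this using 3 <;> rw [hltdef, htdef]
  have hBk : B k ≤ 0.725*t^2 + 1.45*t*lt + 0.25*t - 11.9 + (1.45*(t + lt) + 1.7) := by
    linarith
  -- final quadratic comparison
  have hlt_tan : lt ≤ 0.15*t + 0.8994 := hltdef ▸ log_t_tangent203 htpos
  have hprod : t*lt ≤ t*(0.15*t + 0.8994) :=
    mul_le_mul_of_nonneg_left hlt_tan (le_of_lt htpos)
  have hlog4 := log4_sq_ub
  rw [← htdef]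
  nlinarith [sq_nonneg (t - 10.63), ht]

end PART4
section PART5
set_option maxHeartbeats 1000000

lemma B_small_range {k : ℕ} (hk21 : 21 ≤ k) (hk96 : k ≤ 96) :
    B k < 49/30 + (Real.log k)^2 - (Real.log 4)^2 + 2*Real.log k := by
  have hlog4 := log4_sq_ub
  rcases le_or_gt k 29 with h | h
  · -- 21 ≤ k ≤ 29
    have hB : B k ≤ B 29 := B_mono h
    rw [hBv29] at hB
    have hX : (2.7725887:ℝ) ≤ Real.log k := by
      refine le_trans log16_lb (Real.log_le_log (by norm_num) ?_)
      exact_mod_cast show (16:ℕ) ≤ k by omega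
    have hX2 : (2.7725887:ℝ)*2.7725887 ≤ (Real.log k)^2 := by nlinarith
    nlinarith
  rcases le_or_gt k 34 with h2 | h2
  · -- 30 ≤ k ≤ 34
    have hB : B k ≤ B 34 := B_mono h2
    rw [hBv34] at hB
    have hX : (3.3990692:ℝ) ≤ Real.log k := by
      refine le_trans log30_lb (Real.log_le_log (by norm_num) ?_)
      exact_mod_cast show (30:ℕ) ≤ k by omega
    have hX2 : (3.3990692:ℝ)*3.3990692 ≤ (Real.log k)^2 := by nlinarith
    nlinarith
  rcases le_or_gt k 52 with h3 | h3
  · -- 35 ≤ k ≤ 52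
    have hB : B k ≤ B 52 := B_mono h3
    rw [hBv52] at hB
    have hX : (3.3990692:ℝ) ≤ Real.log k := by
      refine le_trans log30_lb (Real.log_le_log (by norm_num) ?_)
      exact_mod_cast show (30:ℕ) ≤ k by omega
    have hX2 : (3.3990692:ℝ)*3.3990692 ≤ (Real.log k)^2 := by nlinarith
    nlinarith
  · -- 53 ≤ k ≤ 96
    have hB : B k ≤ B 96 := B_mono hk96
    rw [hBv96] at hB
    have hX : (3.9544:ℝ) ≤ Real.log k := by
      refine le_trans log53_lb (Real.log_le_log (by norm_num) ?_)
      exact_mod_cast show (53:ℕ) ≤ k by omega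
    have hX2 : (3.9544:ℝ)*3.9544 ≤ (Real.log k)^2 := by nlinarith
    nlinarith

end PART5

theorem stmt_10 (n : ℕ) (hn : 22 ≤ n) :
    B (n - 1) < 49 / 30 + Real.log ((n : ℝ) - 1) ^ 2 - Real.log 4 ^ 2 +
      2 * Real.log ((n : ℝ) - 1) := by
  have hcast : ((n : ℝ) - 1) = ((n - 1 : ℕ) : ℝ) := by
    push_cast [Nat.cast_sub (show 1 ≤ n by omega)]
    ring
  rw [hcast]
  have hk21 : 21 ≤ n - 1 := by omega
  rcases le_or_gt (n - 1) 96 with h | h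
  · exact B_small_range hk21 h
  · exact final_big (by omega)
end

section
/- For all positive integers n with n ≥ 22, one has 49/30 + log²(n − 1) − log²(4) + 2 log(n − 1) < log²(n log n). -/
open Real

theorem stmt_11 (n : ℕ) (hn : 22 ≤ n) :
    49 / 30 + Real.log ((n : ℝ) - 1) ^ 2 - Real.log 4 ^ 2 + 2 * Real.log ((n : ℝ) - 1) <
      Real.log ((n : ℝ) * Real.log n) ^ 2 := by
  have hn22 : (22 : ℝ) ≤ (n : ℝ) := by exact_mod_cast hn
  -- exp e < 22
  have hexp1 : Real.exp 1 < 2.7182818286 := Real.exp_one_lt_d9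
  have hexp3 : Real.exp 3 = Real.exp 1 ^ 3 := by
    rw [← Real.exp_nat_mul]; norm_num
  have he3 : Real.exp 3 < 22 := by
    rw [hexp3]
    have : Real.exp 1 ^ 3 < 2.7182818286 ^ 3 :=
      pow_lt_pow_left₀ hexp1 (Real.exp_pos 1).le (by norm_num)
    nlinarith
  have hee : Real.exp (Real.exp 1) < 22 := by
    have : Real.exp 1 < 3 := by nlinarith
    calc Real.exp (Real.exp 1) < Real.exp 3 := Real.exp_lt_exp.2 this
      _ < 22 := he3
  have hlog22 : Real.exp 1 < Real.log 22 := by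
    rw [Real.lt_log_iff_exp_lt (by norm_num : (0:ℝ) < 22)]
    exact hee
  have hb : Real.exp 1 < Real.log n :=
    lt_of_lt_of_le hlog22 (Real.log_le_log (by norm_num) hn22)
  have hbpos : (0:ℝ) < Real.log n := lt_trans (Real.exp_pos 1) hb
  have hc : 1 < Real.log (Real.log n) := by
    have := Real.log_lt_log (Real.exp_pos 1) hb
    rwa [Real.log_exp] at this
  have ha : 0 < Real.log ((n : ℝ) - 1) := by
    apply Real.log_pos; linarith
  have hab : Real.log ((n : ℝ) - 1) < Real.log n :=
    Real.log_lt_log (by linarith) (by linarith)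
  have hsplit : Real.log ((n : ℝ) * Real.log n)
      = Real.log n + Real.log (Real.log n) := by
    rw [Real.log_mul (by positivity) (ne_of_gt hbpos)]
  have hlog2 : Real.log 2 > 0.6931471803 := Real.log_two_gt_d9
  have hlog4 : Real.log 4 = 2 * Real.log 2 := by
    rw [show (4:ℝ) = 2^2 by norm_num, Real.log_pow]; push_cast; ring
  have h4 : 49/30 < Real.log 4 ^ 2 := by
    rw [hlog4]; nlinarith
  rw [hsplit]
  nlinarith [mul_lt_mul_of_pos_left hc hbpos, sq_nonneg (Real.log (Real.log n)),
    mul_self_le_mul_self (le_of_lt ha) (le_of_lt hab)]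
end
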